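/- arXiv:1306.0931 — 6 statements merged into one kernel-verified Lean document; each statement's English description precedes it below -/
import Mathlib

section
/- Let Δt > 0, let f^n, f^{n+1/2}, f^{n+1} be phase-space densities and E^n, E^{n+1} electric fields satisfying the Scheme-1 relations pointwise on ℝ^d × ℝ^d: f^{n+1/2}(x,v) = f^n(x,v) − (Δt/2)( v·∇_x f^n(x,v) + E^n(x)·∇_v f^n(x,v) ), E^{n+1}(x) = E^n(x) − Δt·J_{f^{n+1/2}}(x), and f^{n+1}(x,v) = f^n(x,v) − Δt( v·∇_x f^{n+1/2}(x,v) + (1/2)(E^n(x)+E^{n+1}(x))·∇_v f^{n+1/2}(x,v) ). Then the discrete total energy is conserved: K(f^{n+1}) + W(E^{n+1}) = K(f^n) + W(E^n). -/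
open MeasureTheory
open scoped RealInnerProductSpace

noncomputable section

/-- Points of `ℝ^d`. -/
abbrev Vec (d : ℕ) := EuclideanSpace ℝ (Fin d)

/-- Gradient of a phase-space function in its first (`x`) argument. -/
def gradx {d : ℕ} (f : Vec d × Vec d → ℝ) (x v : Vec d) : Vec d :=
  gradient (fun y => f (y, v)) x

/-- Gradient of a phase-space function in its second (`v`) argument. -/
def gradv {d : ℕ} (f : Vec d × Vec d → ℝ) (x v : Vec d) : Vec d :=
  gradient (fun w => f (x, w)) v

/-- Charge density `ρ_f(x) = ∫ f(x,v) dv`. -/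
def rho {d : ℕ} (f : Vec d × Vec d → ℝ) (x : Vec d) : ℝ :=
  ∫ v, f (x, v)

/-- Current `J_f(x) = ∫ f(x,v) v dv`. -/
def Jcur {d : ℕ} (f : Vec d × Vec d → ℝ) (x : Vec d) : Vec d :=
  ∫ v, f (x, v) • v

/-- Particle number `N(f)`. -/
def Npart {d : ℕ} (f : Vec d × Vec d → ℝ) : ℝ :=
  ∫ x, ∫ v, f (x, v)

/-- Kinetic energy `K(f) = ∫∫ f(x,v) |v|² dv dx`. -/
def Kin {d : ℕ} (f : Vec d × Vec d → ℝ) : ℝ :=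
  ∫ x, ∫ v, f (x, v) * ‖v‖ ^ 2

/-- Electric energy `W(E) = ∫ |E(x)|² dx`. -/
def Wel {d : ℕ} (E : Vec d → Vec d) : ℝ :=
  ∫ x, ‖E x‖ ^ 2

/-- A phase-space density: smooth and compactly supported. -/
def IsDensity {d : ℕ} (f : Vec d × Vec d → ℝ) : Prop :=
  ContDiff ℝ (⊤ : ℕ∞) f ∧ HasCompactSupport f

/-- An electric field: continuous with finite electric energy. -/
def IsEField {d : ℕ} (E : Vec d → Vec d) : Prop :=
  Continuous E ∧ Integrable (fun x => ‖E x‖ ^ 2)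

/-- Divergence in `x` of a vector field on `ℝ^d`. -/
def divg {d : ℕ} (F : Vec d → Vec d) (x : Vec d) : ℝ :=
  ∑ i : Fin d, fderiv ℝ F x (EuclideanSpace.single i 1) i


/-! ### Auxiliary lemmas -/

section Aux

open Function

/-- Right slices of compactly supported functions have compact support. -/
lemma hcs_slice_right {α β γ : Type*} [TopologicalSpace α] [TopologicalSpace β]
    [T2Space α] [T2Space β] [Zero γ]
    {F : α × β → γ} (h : HasCompactSupport F) (x : α) :
    HasCompactSupport (fun v => F (x, v)) := by
  apply HasCompactSupport.intro (h.image continuous_snd)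
  intro v hv
  by_contra hne
  exact hv ⟨(x, v), subset_tsupport F hne, rfl⟩

/-- Left slices of compactly supported functions have compact support. -/
lemma hcs_slice_left {α β γ : Type*} [TopologicalSpace α] [TopologicalSpace β]
    [T2Space α] [T2Space β] [Zero γ]
    {F : α × β → γ} (h : HasCompactSupport F) (v : β) :
    HasCompactSupport (fun y => F (y, v)) := by
  apply HasCompactSupport.intro (h.image continuous_fst)
  intro y hy
  by_contra hne
  exact hy ⟨(y, v), subset_tsupport F hne, rfl⟩

/-- The derivative of a right slice is the joint derivative in direction `(0, c)`. -/
lemma fderiv_slice_right {d : ℕ} {f : Vec d × Vec d → ℝ} (hf : ContDiff ℝ (⊤ : ℕ∞) f)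
    (x v c : Vec d) : fderiv ℝ (fun w => f (x, w)) v c = fderiv ℝ f (x, v) (0, c) := by
  have h1 : HasFDerivAt f (fderiv ℝ f (x, v)) (x, v) :=
    (hf.differentiable (by simp) (x, v)).hasFDerivAt
  have h2 : HasFDerivAt (fun w : Vec d => (x, w))
      ((ContinuousLinearMap.inr ℝ (Vec d) (Vec d))) v :=
    HasFDerivAt.prodMk (hasFDerivAt_const x v) (hasFDerivAt_id v)
  have h3 : (fun w => f (x, w)) = f ∘ Prod.mk x := rfl
  rw [h3, (h1.comp v h2).fderiv]; rfl

/-- The derivative of a left slice is the joint derivative in direction `(c, 0)`. -/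
lemma fderiv_slice_left {d : ℕ} {f : Vec d × Vec d → ℝ} (hf : ContDiff ℝ (⊤ : ℕ∞) f)
    (x v c : Vec d) : fderiv ℝ (fun y => f (y, v)) x c = fderiv ℝ f (x, v) (c, 0) := by
  have h1 : HasFDerivAt f (fderiv ℝ f (x, v)) (x, v) :=
    (hf.differentiable (by simp) (x, v)).hasFDerivAt
  have h2 : HasFDerivAt (fun y : Vec d => (y, v))
      ((ContinuousLinearMap.inl ℝ (Vec d) (Vec d))) x :=
    HasFDerivAt.prodMk (hasFDerivAt_id x) (hasFDerivAt_const v x)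
  have h3 : (fun y => f (y, v)) = f ∘ (fun y => (y, v)) := rfl
  rw [h3, (h1.comp x h2).fderiv]; rfl

lemma inner_gradx_eq {d : ℕ} (f : Vec d × Vec d → ℝ) (x v c : Vec d) :
    ⟪c, gradx f x v⟫ = fderiv ℝ (fun y => f (y, v)) x c := by
  rw [real_inner_comm]
  exact InnerProductSpace.toDual_symm_apply

lemma inner_gradv_eq {d : ℕ} (f : Vec d × Vec d → ℝ) (x v c : Vec d) :
    ⟪c, gradv f x v⟫ = fderiv ℝ (fun w => f (x, w)) v c := by
  rw [real_inner_comm]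
  exact InnerProductSpace.toDual_symm_apply

/-- The integral of a directional derivative of a compactly supported function vanishes. -/
lemma integral_fderiv_apply_zero {d : ℕ} {u : Vec d → ℝ} (hu : ContDiff ℝ (⊤ : ℕ∞) u)
    (hcs : HasCompactSupport u) (w : Vec d) :
    ∫ x, fderiv ℝ u x w = 0 := by
  have h1 : Integrable (fun x => fderiv ℝ u x w * (1 : ℝ)) := by
    simp only [mul_one]
    exact ((hu.continuous_fderiv (by simp)).clm_apply
      continuous_const).integrable_of_hasCompactSupport (hcs.fderiv_apply ℝ w)
  have h2 : Integrable (fun x : Vec d => u x * fderiv ℝ (fun _ => (1:ℝ)) x w) := by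
    simp [fderiv_fun_const]
  have h3 : Integrable (fun x : Vec d => u x * (1 : ℝ)) := by
    simp only [mul_one]
    exact hu.continuous.integrable_of_hasCompactSupport hcs
  have := integral_mul_fderiv_eq_neg_fderiv_mul_of_integrable h1 h2 h3
    (fun x _ => hu.differentiable (by simp) x) (fun x _ => differentiableAt_const (1 : ℝ))
  simp only [fderiv_fun_const, Pi.zero_apply, ContinuousLinearMap.zero_apply, mul_zero, mul_one,
    integral_zero] at this
  have h4 := this.symm
  rw [neg_eq_zero] at h4
  exact h4

lemma fderiv_normsq {d : ℕ} (v c : Vec d) :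
    fderiv ℝ (fun w : Vec d => ‖w‖ ^ 2) v c = 2 * ⟪v, c⟫ := by
  have h : HasFDerivAt (fun w : Vec d => ‖w‖ ^ 2) (2 • (innerSL ℝ v)) v :=
    (hasStrictFDerivAt_norm_sq v).hasFDerivAt
  rw [h.fderiv]
  simp [two_smul, two_mul]

lemma diff_normsq {d : ℕ} : Differentiable ℝ (fun w : Vec d => ‖w‖ ^ 2) :=
  fun v => ((hasStrictFDerivAt_norm_sq v).hasFDerivAt).differentiableAt

/-- Integration by parts against `‖v‖²`. -/
lemma parts_normsq {d : ℕ} {u : Vec d → ℝ} (hu : ContDiff ℝ (⊤ : ℕ∞) u)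
    (hcs : HasCompactSupport u) (c : Vec d) :
    ∫ v, fderiv ℝ u v c * ‖v‖ ^ 2 = -2 * ⟪c, ∫ v, u v • v⟫ := by
  have hcont_fd : Continuous fun v => fderiv ℝ u v c :=
    (hu.continuous_fderiv (by simp)).clm_apply continuous_const
  have h1 : Integrable (fun v => fderiv ℝ u v c * ‖v‖ ^ 2) :=
    (hcont_fd.mul (continuous_norm.pow 2)).integrable_of_hasCompactSupport
      ((hcs.fderiv_apply ℝ c).mul_right)
  have h2 : Integrable (fun v : Vec d => u v * fderiv ℝ (fun w : Vec d => ‖w‖ ^ 2) v c) := by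
    have heq : (fun v : Vec d => u v * fderiv ℝ (fun w : Vec d => ‖w‖ ^ 2) v c)
        = fun v : Vec d => u v * (2 * ⟪v, c⟫) := by
      funext v; rw [fderiv_normsq]
    rw [heq]
    have hc : Continuous fun v : Vec d => u v * (2 * ⟪v, c⟫) :=
      hu.continuous.mul (continuous_const.mul (continuous_id.inner continuous_const))
    exact hc.integrable_of_hasCompactSupport hcs.mul_right
  have h3 : Integrable (fun v : Vec d => u v * ‖v‖ ^ 2) :=
    (hu.continuous.mul (continuous_norm.pow 2)).integrable_of_hasCompactSupport hcs.mul_right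
  have key := integral_mul_fderiv_eq_neg_fderiv_mul_of_integrable h1 h2 h3
    (fun x _ => hu.differentiable (by simp) x) (fun x _ => diff_normsq x)
  have hsmul : Integrable (fun v : Vec d => u v • v) :=
    (hu.continuous.smul continuous_id).integrable_of_hasCompactSupport (hcs.smul_right)
  have hL : ∫ v, u v * fderiv ℝ (fun w : Vec d => ‖w‖ ^ 2) v c = 2 * ⟪c, ∫ v, u v • v⟫ := by
    rw [← integral_inner hsmul c, ← integral_const_mul]
    congr 1; funext v
    rw [fderiv_normsq, real_inner_smul_right, real_inner_comm]
    ring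
  rw [hL] at key
  linarith [key]

/-- Pointwise algebraic identity for the electric-energy update. -/
lemma norm_step {d : ℕ} (a b : Vec d) (t : ℝ) :
    ‖a - t • b‖ ^ 2 = ‖a‖ ^ 2 - t * ⟪a + (a - t • b), b⟫ := by
  rw [norm_sub_sq_real, inner_add_left, inner_sub_left, real_inner_smul_right,
    real_inner_smul_left, real_inner_self_eq_norm_sq, norm_smul, mul_pow, Real.norm_eq_abs,
    sq_abs]
  ring

end Aux

/-- total energy conservation for the explicit Scheme-1 for Vlasov–Ampère. -/
theorem scheme1_total_energy_conservation
    {d : ℕ} (hd : 1 ≤ d) (Δt : ℝ) (hΔt : 0 < Δt)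
    (fn fh fn1 : Vec d × Vec d → ℝ) (En En1 : Vec d → Vec d)
    (hfn : IsDensity fn) (hfh : IsDensity fh) (hfn1 : IsDensity fn1)
    (hEn : IsEField En) (hEn1 : IsEField En1)
    (h1 : ∀ x v : Vec d, fh (x, v) =
      fn (x, v) - (Δt / 2) * (⟪v, gradx fn x v⟫ + ⟪En x, gradv fn x v⟫))
    (h2 : ∀ x : Vec d, En1 x = En x - Δt • Jcur fh x)
    (h3 : ∀ x v : Vec d, fn1 (x, v) =
      fn (x, v) - Δt * (⟪v, gradx fh x v⟫ +
        (1 / 2) * ⟪En x + En1 x, gradv fh x v⟫)) :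
    Kin fn1 + Wel En1 = Kin fn + Wel En := by
  obtain ⟨hfnsm, hfncs⟩ := hfn
  obtain ⟨hfhsm, hfhcs⟩ := hfh
  obtain ⟨hEnc, hEni⟩ := hEn
  obtain ⟨hEn1c, hEn1i⟩ := hEn1
  clear hfn1 h1 hd hΔt
  -- the joint-derivative forms of the two transport terms
  set A : Vec d × Vec d → ℝ :=
    fun p => fderiv ℝ fh p (p.2, 0) * ‖p.2‖ ^ 2 with hA_def
  set B : Vec d × Vec d → ℝ :=
    fun p => fderiv ℝ fh p (0, En p.1 + En1 p.1) * ‖p.2‖ ^ 2 with hB_def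
  -- joint continuity and compact support
  have hfd_cont : Continuous (fderiv ℝ fh) := hfhsm.continuous_fderiv (by simp)
  have hA_cont : Continuous A := by
    rw [hA_def]
    exact (hfd_cont.clm_apply (continuous_snd.prodMk continuous_const)).mul
      (continuous_snd.norm.pow 2)
  have hB_cont : Continuous B := by
    rw [hB_def]
    exact (hfd_cont.clm_apply (continuous_const.prodMk
      ((hEnc.comp continuous_fst).add (hEn1c.comp continuous_fst)))).mul
      (continuous_snd.norm.pow 2)
  have hA_cs : HasCompactSupport A := by
    apply HasCompactSupport.intro (hfhcs.fderiv ℝ)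
    intro p hp
    simp only [hA_def, image_eq_zero_of_notMem_tsupport hp, ContinuousLinearMap.zero_apply,
      zero_mul]
  have hB_cs : HasCompactSupport B := by
    apply HasCompactSupport.intro (hfhcs.fderiv ℝ)
    intro p hp
    simp only [hB_def, image_eq_zero_of_notMem_tsupport hp, ContinuousLinearMap.zero_apply,
      zero_mul]
  have hA_int : Integrable A := hA_cont.integrable_of_hasCompactSupport hA_cs
  have hB_int : Integrable B := hB_cont.integrable_of_hasCompactSupport hB_cs
  have hfnK_cont : Continuous (fun p : Vec d × Vec d => fn p * ‖p.2‖ ^ 2) :=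
    hfnsm.continuous.mul (continuous_snd.norm.pow 2)
  have hfnK_int : Integrable (fun p : Vec d × Vec d => fn p * ‖p.2‖ ^ 2) :=
    hfnK_cont.integrable_of_hasCompactSupport hfncs.mul_right
  -- the interaction function and the interaction integral S
  set S : ℝ := ∫ x, ⟪En x + En1 x, Jcur fh x⟫ with hS_def
  have hΦ_cont : Continuous (fun p : Vec d × Vec d => ⟪En p.1 + En1 p.1, fh p • p.2⟫) :=
    ((hEnc.comp continuous_fst).add (hEn1c.comp continuous_fst)).inner
      (hfhsm.continuous.smul continuous_snd)
  have hΦ_cs : HasCompactSupport (fun p : Vec d × Vec d => ⟪En p.1 + En1 p.1, fh p • p.2⟫) := by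
    apply HasCompactSupport.intro hfhcs
    intro p hp
    simp [image_eq_zero_of_notMem_tsupport hp]
  have hΦ_int : Integrable (fun p : Vec d × Vec d => ⟪En p.1 + En1 p.1, fh p • p.2⟫) :=
    hΦ_cont.integrable_of_hasCompactSupport hΦ_cs
  have hfh_slice_int : ∀ x : Vec d, Integrable (fun v => fh (x, v) • v) := by
    intro x
    exact ((hfhsm.continuous.comp (Continuous.prodMk_right x)).smul
      continuous_id).integrable_of_hasCompactSupport ((hcs_slice_right hfhcs x).smul_right)
  have hS_int : Integrable (fun x => ⟪En x + En1 x, Jcur fh x⟫) := by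
    have h' := hΦ_int
    rw [Measure.volume_eq_prod] at h'
    refine h'.integral_prod_left.congr (ae_of_all _ fun x => ?_)
    exact integral_inner (𝕜 := ℝ) (hfh_slice_int x) (En x + En1 x)
  -- pointwise identities linking A, B to the gradient form
  have hAx : ∀ x v : Vec d, ⟪v, gradx fh x v⟫ * ‖v‖ ^ 2 = A (x, v) := by
    intro x v
    simp only [hA_def]
    rw [inner_gradx_eq, fderiv_slice_left hfhsm]
  have hBx : ∀ x v : Vec d, ⟪En x + En1 x, gradv fh x v⟫ * ‖v‖ ^ 2 = B (x, v) := by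
    intro x v
    simp only [hB_def]
    rw [inner_gradv_eq, fderiv_slice_right hfhsm]
  -- slice integrabilities in v at fixed x
  have hfn_slice : ∀ x : Vec d, Integrable (fun v => fn (x, v) * ‖v‖ ^ 2) := fun x =>
    ((hfnsm.continuous.comp (Continuous.prodMk_right x)).mul
      (continuous_norm.pow 2)).integrable_of_hasCompactSupport
      ((hcs_slice_right hfncs x).mul_right)
  have hA_slice : ∀ x : Vec d, Integrable (fun v => A (x, v)) := fun x =>
    (hA_cont.comp (Continuous.prodMk_right x)).integrable_of_hasCompactSupport
      (hcs_slice_right hA_cs x)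
  have hB_slice : ∀ x : Vec d, Integrable (fun v => B (x, v)) := fun x =>
    (hB_cont.comp (Continuous.prodMk_right x)).integrable_of_hasCompactSupport
      (hcs_slice_right hB_cs x)
  -- inner (v) integral decomposition of the kinetic energy of fn1
  have key_inner : ∀ x : Vec d, (∫ v, fn1 (x, v) * ‖v‖ ^ 2)
      = (∫ v, fn (x, v) * ‖v‖ ^ 2) - Δt * (∫ v, A (x, v)) - Δt / 2 * (∫ v, B (x, v)) := by
    intro x
    have e : ∀ v : Vec d, fn1 (x, v) * ‖v‖ ^ 2
        = fn (x, v) * ‖v‖ ^ 2 - Δt * A (x, v) - Δt / 2 * B (x, v) := by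
      intro v
      rw [h3 x v, ← hAx x v, ← hBx x v]
      ring
    have i1 : Integrable (fun v : Vec d => Δt * A (x, v)) := (hA_slice x).const_mul Δt
    have i2 : Integrable (fun v : Vec d => Δt / 2 * B (x, v)) := (hB_slice x).const_mul (Δt / 2)
    have i3 : Integrable (fun v : Vec d => fn (x, v) * ‖v‖ ^ 2 - Δt * A (x, v)) :=
      (hfn_slice x).sub i1
    rw [integral_congr_ae (ae_of_all _ e), integral_sub i3 i2,
      integral_sub (hfn_slice x) i1, integral_const_mul, integral_const_mul]
  -- outer integrabilities
  have hfn_outer : Integrable (fun x : Vec d => ∫ v, fn (x, v) * ‖v‖ ^ 2) := by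
    have h' := hfnK_int; rw [Measure.volume_eq_prod] at h'
    exact h'.integral_prod_left
  have hA_outer : Integrable (fun x : Vec d => ∫ v, A (x, v)) := by
    have h' := hA_int; rw [Measure.volume_eq_prod] at h'
    exact h'.integral_prod_left
  have hB_outer : Integrable (fun x : Vec d => ∫ v, B (x, v)) := by
    have h' := hB_int; rw [Measure.volume_eq_prod] at h'
    exact h'.integral_prod_left
  -- the A term integrates to zero (Fubini + vanishing of derivative integrals)
  have hA_zero : ∫ x, ∫ v, A (x, v) = 0 := by
    have hswap : ∫ x, ∫ v, A (x, v) = ∫ v, ∫ x, A (x, v) :=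
      integral_integral_swap_of_hasCompactSupport (f := fun x v => A (x, v)) hA_cont hA_cs
    rw [hswap]
    have hz : ∀ v : Vec d, ∫ x, A (x, v) = 0 := by
      intro v
      have e : ∀ x : Vec d, A (x, v) = fderiv ℝ (fun y => fh (y, v)) x v * ‖v‖ ^ 2 := by
        intro x
        simp only [hA_def]
        rw [fderiv_slice_left hfhsm]
      have hsm : ContDiff ℝ (⊤ : ℕ∞) (fun y : Vec d => fh (y, v)) :=
        hfhsm.comp (contDiff_id.prodMk contDiff_const)
      rw [integral_congr_ae (ae_of_all _ e), integral_mul_const,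
        integral_fderiv_apply_zero hsm (hcs_slice_left hfhcs v), zero_mul]
    rw [integral_congr_ae (ae_of_all _ hz), integral_zero]
  -- the B term integrates to -2 S (integration by parts in v)
  have hB_val : ∫ x, ∫ v, B (x, v) = -2 * S := by
    have hpt : ∀ x : Vec d, ∫ v, B (x, v) = -2 * ⟪En x + En1 x, Jcur fh x⟫ := by
      intro x
      have e : ∀ v : Vec d,
          B (x, v) = fderiv ℝ (fun w => fh (x, w)) v (En x + En1 x) * ‖v‖ ^ 2 := by
        intro v
        simp only [hB_def]
        rw [fderiv_slice_right hfhsm]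
      rw [integral_congr_ae (ae_of_all _ e)]
      exact parts_normsq (hfhsm.comp (contDiff_const.prodMk contDiff_id))
        (hcs_slice_right hfhcs x) _
    rw [integral_congr_ae (ae_of_all _ hpt), integral_const_mul, hS_def]
  -- kinetic energy balance
  have hK : Kin fn1 = Kin fn + Δt * S := by
    have : Kin fn1 = ∫ x, ((∫ v, fn (x, v) * ‖v‖ ^ 2)
        - Δt * (∫ v, A (x, v)) - Δt / 2 * (∫ v, B (x, v))) := by
      simp only [Kin]
      exact integral_congr_ae (ae_of_all _ key_inner)
    have j1 : Integrable (fun x : Vec d => Δt * ∫ v, A (x, v)) := hA_outer.const_mul Δt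
    have j2 : Integrable (fun x : Vec d => Δt / 2 * ∫ v, B (x, v)) :=
      hB_outer.const_mul (Δt / 2)
    have j3 : Integrable (fun x : Vec d => (∫ v, fn (x, v) * ‖v‖ ^ 2) - Δt * ∫ v, A (x, v)) :=
      hfn_outer.sub j1
    rw [this, integral_sub j3 j2, integral_sub hfn_outer j1,
      integral_const_mul, integral_const_mul, hA_zero, hB_val]
    simp only [Kin]
    ring
  -- electric energy balance
  have hW : Wel En1 = Wel En - Δt * S := by
    have hpt : ∀ x : Vec d, ‖En1 x‖ ^ 2
        = ‖En x‖ ^ 2 - Δt * ⟪En x + En1 x, Jcur fh x⟫ := by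
      intro x
      rw [h2 x]
      have := norm_step (En x) (Jcur fh x) Δt
      rw [this]
    simp only [Wel]
    have j4 : Integrable (fun x : Vec d => Δt * ⟪En x + En1 x, Jcur fh x⟫) :=
      hS_int.const_mul Δt
    rw [integral_congr_ae (ae_of_all _ hpt), integral_sub hEni j4,
      integral_const_mul, hS_def]
  rw [hK, hW]
  ring
end
end

section
/- Let Δt > 0, let f^n, f^{n+1} be phase-space densities and E^n, E^{n+1} electric fields satisfying the implicit-midpoint Scheme-2 relations pointwise: f^{n+1}(x,v) = f^n(x,v) − Δt( v·∇_x g(x,v) + (1/2)(E^n(x)+E^{n+1}(x))·∇_v g(x,v) ) where g = (f^n + f^{n+1})/2, and E^{n+1}(x) = E^n(x) − (Δt/2)( J_{f^n}(x) + J_{f^{n+1}}(x) ). Then K(f^{n+1}) + W(E^{n+1}) = K(f^n) + W(E^n). -/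
open MeasureTheory
open scoped RealInnerProductSpace

noncomputable section

section helpers

variable {d : ℕ}

private lemma inner_gradient_eq (φ : Vec d → ℝ) (x c : Vec d) :
    ⟪c, gradient φ x⟫ = fderiv ℝ φ x c := by
  rw [real_inner_comm]
  exact InnerProductSpace.toDual_symm_apply

private lemma integral_fderiv_apply {φ : Vec d → ℝ} (hφ : ContDiff ℝ (⊤ : ℕ∞) φ)
    (hs : HasCompactSupport φ) (c : Vec d) :
    ∫ x, fderiv ℝ φ x c = 0 := by
  obtain ⟨C, hC⟩ := ContDiff.lipschitzWith_of_hasCompactSupport hs hφ (by simp)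
  have h := (LipschitzWith.const (α := Vec d) (1 : ℝ)).integral_lineDeriv_mul_eq
    (μ := volume) hC hs (-c)
  have hzero : ∀ x : Vec d, lineDeriv ℝ (fun _ : Vec d => (1:ℝ)) x (-c) = 0 := by
    intro x; simp [lineDeriv]
  simp only [hzero, zero_mul, integral_zero, neg_neg, mul_one] at h
  calc ∫ x, fderiv ℝ φ x c = ∫ x, lineDeriv ℝ φ x c := by
        refine integral_congr_ae (Filter.Eventually.of_forall fun x => ?_)
        exact ((hφ.differentiable (by simp) x).lineDeriv_eq_fderiv).symm
    _ = 0 := h.symm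

private lemma fderiv_supp_zero {E F : Type*} [NormedAddCommGroup E] [NormedSpace ℝ E]
    [NormedAddCommGroup F] [NormedSpace ℝ F] {φ : E → F} {x : E}
    (hx : x ∉ tsupport φ) : fderiv ℝ φ x = 0 := by
  by_contra h
  exact hx (support_fderiv_subset ℝ (Function.mem_support.mpr h))

/-- Integration by parts in `v`. -/
private lemma ibp_v {ψ : Vec d → ℝ} (hψ : ContDiff ℝ (⊤ : ℕ∞) ψ)
    (hs : HasCompactSupport ψ) (c : Vec d) :
    ∫ v, fderiv ℝ ψ v c * ‖v‖ ^ 2 = -2 * ⟪c, ∫ v, ψ v • v⟫ := by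
  have hφ : ContDiff ℝ (⊤ : ℕ∞) (fun v : Vec d => ψ v * ‖v‖ ^ 2) :=
    hψ.mul (contDiff_norm_sq ℝ)
  have hφs : HasCompactSupport (fun v : Vec d => ψ v * ‖v‖ ^ 2) := hs.mul_right
  have h0 := integral_fderiv_apply hφ hφs c
  have hder : ∀ v : Vec d, fderiv ℝ (fun v : Vec d => ψ v * ‖v‖ ^ 2) v c
      = fderiv ℝ ψ v c * ‖v‖ ^ 2 + ψ v * (2 * ⟪v, c⟫) := by
    intro v
    have h1 : HasFDerivAt (fun v : Vec d => ‖v‖ ^ 2) (2 • (innerSL ℝ v)) v :=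
      (hasStrictFDerivAt_norm_sq v).hasFDerivAt
    have h2 := ((hψ.differentiable (by simp) v).hasFDerivAt.mul h1).fderiv
    rw [show (fun v : Vec d => ψ v * ‖v‖ ^ 2) = (ψ * fun v => ‖v‖ ^ 2) from rfl, h2]
    simp [mul_comm]
    ring
  rw [integral_congr_ae (Filter.Eventually.of_forall hder)] at h0
  have hcont := (hψ.fderiv_right (m := (⊤ : ℕ∞)) (by simp)).continuous
  have hA : Integrable (fun v : Vec d => fderiv ℝ ψ v c * ‖v‖ ^ 2) := by
    refine Continuous.integrable_of_hasCompactSupport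
      ((hcont.clm_apply continuous_const).mul (continuous_norm.pow 2)) ?_
    refine HasCompactSupport.intro hs fun v hv => ?_
    rw [fderiv_supp_zero hv]; simp
  have hB : Integrable (fun v : Vec d => ψ v * (2 * ⟪v, c⟫)) := by
    refine Continuous.integrable_of_hasCompactSupport
      (hψ.continuous.mul (continuous_const.mul (continuous_id.inner continuous_const))) ?_
    exact hs.mul_right
  rw [integral_add hA hB] at h0
  have hJ : Integrable (fun v : Vec d => ψ v • v) := by
    refine Continuous.integrable_of_hasCompactSupport
      (hψ.continuous.smul continuous_id) hs.smul_right
  have hBval : ∫ v, ψ v * (2 * ⟪v, c⟫) = 2 * ⟪c, ∫ v, ψ v • v⟫ := by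
    rw [← integral_inner hJ c]
    rw [← integral_const_mul]
    refine integral_congr_ae (Filter.Eventually.of_forall fun v => ?_)
    show ψ v * (2 * ⟪v, c⟫) = 2 * ⟪c, ψ v • v⟫
    rw [real_inner_smul_right, real_inner_comm]
    ring
  rw [hBval] at h0
  linarith

private lemma slice_x_supp {g : Vec d × Vec d → ℝ} (hgs : HasCompactSupport g)
    (v : Vec d) : HasCompactSupport fun y => g (y, v) := by
  refine HasCompactSupport.intro (hgs.image continuous_fst) fun y hy => ?_
  by_contra h
  exact hy ⟨(y, v), subset_tsupport _ (Function.mem_support.mpr h), rfl⟩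

private lemma slice_v_supp {g : Vec d × Vec d → ℝ} (hgs : HasCompactSupport g)
    (x : Vec d) : HasCompactSupport fun w => g (x, w) := by
  refine HasCompactSupport.intro (hgs.image continuous_snd) fun w hw => ?_
  by_contra h
  exact hw ⟨(x, w), subset_tsupport _ (Function.mem_support.mpr h), rfl⟩

private lemma fderiv_slice_x {g : Vec d × Vec d → ℝ} (hg : ContDiff ℝ (⊤ : ℕ∞) g)
    (x v c : Vec d) :
    fderiv ℝ (fun y => g (y, v)) x c = fderiv ℝ g (x, v) (c, 0) := by
  have h := ((hg.differentiable (by simp) (x, v)).hasFDerivAt.comp x (f := fun e : Vec d => (e, v))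
    (hasFDerivAt_prodMk_left x v)).fderiv
  rw [show (fun y => g (y, v)) = g ∘ fun e => (e, v) from rfl, h]; rfl

private lemma fderiv_slice_v {g : Vec d × Vec d → ℝ} (hg : ContDiff ℝ (⊤ : ℕ∞) g)
    (x v c : Vec d) :
    fderiv ℝ (fun w => g (x, w)) v c = fderiv ℝ g (x, v) (0, c) := by
  have h := ((hg.differentiable (by simp) (x, v)).hasFDerivAt.comp v
    (hasFDerivAt_prodMk_right x v)).fderiv
  rw [show (fun w => g (x, w)) = g ∘ Prod.mk x from rfl, h]; rfl

end helpers

/-- total energy conservation for the implicit midpoint Scheme-2. -/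
theorem scheme2_total_energy_conservation
    {d : ℕ} (hd : 1 ≤ d) (Δt : ℝ) (hΔt : 0 < Δt)
    (fn fn1 : Vec d × Vec d → ℝ) (En En1 : Vec d → Vec d)
    (hfn : IsDensity fn) (hfn1 : IsDensity fn1)
    (hEn : IsEField En) (hEn1 : IsEField En1)
    (h1 : ∀ x v : Vec d, fn1 (x, v) =
      fn (x, v) - Δt * (⟪v, gradx (fun p => (fn p + fn1 p) / 2) x v⟫ +
        (1 / 2) * ⟪En x + En1 x, gradv (fun p => (fn p + fn1 p) / 2) x v⟫))
    (h2 : ∀ x : Vec d, En1 x = En x - (Δt / 2) • (Jcur fn x + Jcur fn1 x)) :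
    Kin fn1 + Wel En1 = Kin fn + Wel En := by
  obtain ⟨hfnC, hfnS⟩ := hfn
  obtain ⟨hfn1C, hfn1S⟩ := hfn1
  set g : Vec d × Vec d → ℝ := fun p => (fn p + fn1 p) / 2 with hgdef
  have hgC : ContDiff ℝ (⊤ : ℕ∞) g := (hfnC.add hfn1C).div_const 2
  have hgS : HasCompactSupport g := by
    refine (hfnS.add hfn1S).mono' fun p hp => ?_
    refine subset_tsupport _ ?_
    simp only [Function.mem_support, hgdef] at hp ⊢
    intro h
    exact hp (by simp [Pi.add_apply] at h ⊢; simpa using h)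
  -- joint integrands
  set G1 : Vec d × Vec d → ℝ := fun p => fderiv ℝ g p (p.2, 0) * ‖p.2‖ ^ 2 with hG1def
  set G2 : Vec d × Vec d → ℝ :=
    fun p => fderiv ℝ g p (0, En p.1 + En1 p.1) * ‖p.2‖ ^ 2 with hG2def
  have hfderivCont : Continuous fun p : Vec d × Vec d => fderiv ℝ g p :=
    (hgC.fderiv_right (m := (⊤ : ℕ∞)) (by simp)).continuous
  have hG1cont : Continuous G1 :=
    (hfderivCont.clm_apply (continuous_snd.prodMk continuous_const)).mul
      (continuous_snd.norm.pow 2)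
  have hG2cont : Continuous G2 :=
    (hfderivCont.clm_apply (continuous_const.prodMk
      ((hEn.1.add hEn1.1).comp continuous_fst))).mul (continuous_snd.norm.pow 2)
  have hG1supp : HasCompactSupport G1 := by
    refine HasCompactSupport.intro hgS fun p hp => ?_
    simp only [hG1def, fderiv_supp_zero hp]; simp
  have hG2supp : HasCompactSupport G2 := by
    refine HasCompactSupport.intro hgS fun p hp => ?_
    simp only [hG2def, fderiv_supp_zero hp]; simp
  have hG1int : Integrable G1 := hG1cont.integrable_of_hasCompactSupport hG1supp
  have hG2int : Integrable G2 := hG2cont.integrable_of_hasCompactSupport hG2supp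
  have hFnint : Integrable (fun p : Vec d × Vec d => fn p * ‖p.2‖ ^ 2) :=
    (hfnC.continuous.mul (continuous_snd.norm.pow 2)).integrable_of_hasCompactSupport
      hfnS.mul_right
  have hFn1int : Integrable (fun p : Vec d × Vec d => fn1 p * ‖p.2‖ ^ 2) :=
    (hfn1C.continuous.mul (continuous_snd.norm.pow 2)).integrable_of_hasCompactSupport
      hfn1S.mul_right
  -- Kin as a joint integral
  have kin_eq : ∀ f : Vec d × Vec d → ℝ,
      Integrable (fun p : Vec d × Vec d => f p * ‖p.2‖ ^ 2) →
      Kin f = ∫ p : Vec d × Vec d, f p * ‖p.2‖ ^ 2 := by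
    intro f hf
    rw [Kin, Measure.volume_eq_prod (Vec d) (Vec d)]
    exact (integral_prod _ hf).symm
  -- pointwise rewriting of the scheme
  have hdiff : ∀ p : Vec d × Vec d,
      (fn1 p - fn p) * ‖p.2‖ ^ 2 = -Δt * (G1 p + 2⁻¹ * G2 p) := by
    rintro ⟨x, v⟩
    have e1 : ⟪v, gradx g x v⟫ = fderiv ℝ g (x, v) (v, 0) := by
      rw [gradx, inner_gradient_eq, fderiv_slice_x hgC]
    have e2 : ⟪En x + En1 x, gradv g x v⟫ = fderiv ℝ g (x, v) (0, En x + En1 x) := by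
      rw [gradv, inner_gradient_eq, fderiv_slice_v hgC]
    have h := h1 x v
    rw [h, hG1def, hG2def]
    simp only [← e1, ← e2]
    ring
  -- the G1 integral vanishes
  have hG1zero : ∫ p : Vec d × Vec d, G1 p = 0 := by
    rw [Measure.volume_eq_prod (Vec d) (Vec d), integral_prod _ hG1int,
      integral_integral_swap (f := fun x v => G1 (x, v)) hG1int]
    have hzero : ∀ v : Vec d, (∫ x, G1 (x, v)) = 0 := by
      intro v
      have hrw : (fun x => G1 (x, v))
          = fun x => fderiv ℝ (fun y => g (y, v)) x v * ‖v‖ ^ 2 := by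
        funext x; rw [hG1def]; simp only [fderiv_slice_x hgC]
      rw [hrw, integral_mul_const,
        integral_fderiv_apply (φ := fun y => g (y, v))
          (hgC.comp (contDiff_id.prodMk contDiff_const))
          (slice_x_supp hgS v) v, zero_mul]
    simp only [hzero, integral_zero]
  -- the G2 integral via integration by parts in v
  have hG2val : ∫ p : Vec d × Vec d, G2 p
      = -2 * ∫ x, ⟪En x + En1 x, ∫ v, g (x, v) • v⟫ := by
    rw [Measure.volume_eq_prod (Vec d) (Vec d), integral_prod _ hG2int,
      ← integral_const_mul]
    refine integral_congr_ae (Filter.Eventually.of_forall fun x => ?_)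
    show (∫ v, G2 (x, v)) = -2 * ⟪En x + En1 x, ∫ v, g (x, v) • v⟫
    have hrw : (∫ v, G2 (x, v))
        = ∫ v, fderiv ℝ (fun w => g (x, w)) v (En x + En1 x) * ‖v‖ ^ 2 := by
      refine integral_congr_ae (Filter.Eventually.of_forall fun v => ?_)
      show fderiv ℝ g (x, v) (0, En x + En1 x) * ‖v‖ ^ 2
        = fderiv ℝ (fun w => g (x, w)) v (En x + En1 x) * ‖v‖ ^ 2
      rw [fderiv_slice_v hgC]
    rw [hrw]
    exact ibp_v (ψ := fun w => g (x, w)) (hgC.comp (contDiff_const.prodMk contDiff_id))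
      (slice_v_supp hgS x) _
  -- kinetic energy difference
  have hK : Kin fn1 - Kin fn = Δt * ∫ x, ⟪En x + En1 x, ∫ v, g (x, v) • v⟫ := by
    rw [kin_eq fn1 hFn1int, kin_eq fn hFnint, ← integral_sub hFn1int hFnint]
    have : (fun p : Vec d × Vec d => fn1 p * ‖p.2‖ ^ 2 - fn p * ‖p.2‖ ^ 2)
        = fun p : Vec d × Vec d => -Δt * (G1 p + 2⁻¹ * G2 p) := by
      funext p; rw [← hdiff p]; ring
    rw [this, integral_const_mul, integral_add hG1int (hG2int.const_mul _),
      integral_const_mul, hG1zero, hG2val]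
    ring
  -- electric energy difference
  have hWpt : ∀ x : Vec d, ‖En1 x‖ ^ 2 - ‖En x‖ ^ 2
      = -Δt * ⟪En x + En1 x, ∫ v, g (x, v) • v⟫ := by
    intro x
    have hint1 : Integrable (fun v : Vec d => fn (x, v) • v) :=
      (((hfnC.comp (contDiff_const.prodMk contDiff_id)).continuous).smul
        continuous_id).integrable_of_hasCompactSupport (slice_v_supp hfnS x).smul_right
    have hint2 : Integrable (fun v : Vec d => fn1 (x, v) • v) :=
      (((hfn1C.comp (contDiff_const.prodMk contDiff_id)).continuous).smul
        continuous_id).integrable_of_hasCompactSupport (slice_v_supp hfn1S x).smul_right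
    have hJg : (∫ v, g (x, v) • v) = (2⁻¹ : ℝ) • (Jcur fn x + Jcur fn1 x) := by
      have hrw : (fun v : Vec d => g (x, v) • v)
          = fun v => (2⁻¹ : ℝ) • (fn (x, v) • v + fn1 (x, v) • v) := by
        funext v
        rw [hgdef]
        rw [smul_add, smul_smul, smul_smul, ← add_smul]
        congr 1
        ring
      rw [hrw, integral_smul, integral_add hint1 hint2, Jcur, Jcur]
    rw [hJg, h2 x]
    set a := En x
    set S := Jcur fn x + Jcur fn1 x
    rw [← real_inner_self_eq_norm_sq, ← real_inner_self_eq_norm_sq]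
    simp only [inner_sub_left, inner_sub_right, inner_add_left, inner_add_right,
      real_inner_smul_left, real_inner_smul_right]
    linear_combination (-(Δt) / 2) * real_inner_comm a S
  have hW : Wel En1 - Wel En = -Δt * ∫ x, ⟪En x + En1 x, ∫ v, g (x, v) • v⟫ := by
    rw [Wel, Wel, ← integral_sub hEn1.2 hEn.2,
      integral_congr_ae (Filter.Eventually.of_forall hWpt), integral_const_mul]
  linarith [hK, hW]
end
end

section
/- Let Δt ∈ ℝ, let f^n, f^{n+1/2}, f^{n+1} be phase-space densities and E^n, E^{n+1} electric fields such that pointwise f^{n+1}(x,v) = f^n(x,v) − Δt( v·∇_x f^{n+1/2}(x,v) + (1/2)(E^n(x)+E^{n+1}(x))·∇_v f^{n+1/2}(x,v) ). Then the kinetic-energy balance ∫_{ℝ^d}∫_{ℝ^d} ( f^{n+1}(x,v) − f^n(x,v) ) |v|² dv dx = Δt ∫_{ℝ^d} ( E^n(x) + E^{n+1}(x) )·J_{f^{n+1/2}}(x) dx holds. -/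
open MeasureTheory
open scoped RealInnerProductSpace

noncomputable section

/-- kinetic-energy balance for the Vlasov corrector step of Scheme-1. -/
theorem scheme1_kinetic_energy_balance
    {d : ℕ} (hd : 1 ≤ d) (Δt : ℝ)
    (fn fh fn1 : Vec d × Vec d → ℝ) (En En1 : Vec d → Vec d)
    (hfn : IsDensity fn) (hfh : IsDensity fh) (hfn1 : IsDensity fn1)
    (hEn : Continuous En) (hEn1 : Continuous En1)
    (h3 : ∀ x v : Vec d, fn1 (x, v) =
      fn (x, v) - Δt * (⟪v, gradx fh x v⟫ +
        (1 / 2) * ⟪En x + En1 x, gradv fh x v⟫)) :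
    (∫ x, ∫ v, (fn1 (x, v) - fn (x, v)) * ‖v‖ ^ 2) =
      Δt * ∫ x, ⟪En x + En1 x, Jcur fh x⟫ := by
  classical
  obtain ⟨hsm, hsupp⟩ := hfh
  have hEc : Continuous (fun x => En x + En1 x) := hEn.add hEn1
  have hdiff : Differentiable ℝ fh := hsm.differentiable (by simp)
  have hfc : Continuous fh := hsm.continuous
  have hDc : Continuous (fderiv ℝ fh) := hsm.continuous_fderiv (by simp)
  -- the norm-square function
  have hg_eq : (fun v : Vec d => ‖v‖ ^ 2) = fun v : Vec d => ⟪v, v⟫ := by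
    funext v; rw [real_inner_self_eq_norm_sq]
  have hgsm : ContDiff ℝ (⊤ : ℕ∞) (fun v : Vec d => ‖v‖ ^ 2) := by
    rw [hg_eq]; exact contDiff_id.inner ℝ contDiff_id
  have hgdiff : Differentiable ℝ (fun v : Vec d => ‖v‖ ^ 2) := hgsm.differentiable (by simp)
  have hgc : Continuous (fun v : Vec d => ‖v‖ ^ 2) := hgsm.continuous
  have hgfd : ∀ v c : Vec d, fderiv ℝ (fun w : Vec d => ‖w‖ ^ 2) v c = 2 * ⟪v, c⟫ := by
    intro v c
    rw [hg_eq, fderiv_inner_apply (𝕜 := ℝ) differentiableAt_fun_id differentiableAt_fun_id]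
    simp only [fderiv_id', ContinuousLinearMap.coe_id', id_eq]
    rw [real_inner_comm]; ring
  have hgfdc : Continuous (fderiv ℝ (fun v : Vec d => ‖v‖ ^ 2)) :=
    hgsm.continuous_fderiv (by simp)
  -- partial derivatives of fh in terms of the full fderiv
  have hx1 : ∀ x v : Vec d, HasFDerivAt (fun y => fh (y, v))
      ((fderiv ℝ fh (x, v)).comp (ContinuousLinearMap.inl ℝ (Vec d) (Vec d))) x := fun x v =>
    (hdiff (x, v)).hasFDerivAt.comp x (hasFDerivAt_prodMk_left x v)
  have hv1 : ∀ x v : Vec d, HasFDerivAt (fun w => fh (x, w))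
      ((fderiv ℝ fh (x, v)).comp (ContinuousLinearMap.inr ℝ (Vec d) (Vec d))) v := fun x v =>
    (hdiff (x, v)).hasFDerivAt.comp v (hasFDerivAt_prodMk_right x v)
  have hx1' : ∀ x v w : Vec d, fderiv ℝ (fun y => fh (y, v)) x w
      = fderiv ℝ fh (x, v) (w, 0) := by
    intro x v w; rw [(hx1 x v).fderiv]; rfl
  have hv1' : ∀ x v c : Vec d, fderiv ℝ (fun w => fh (x, w)) v c
      = fderiv ℝ fh (x, v) (0, c) := by
    intro x v c; rw [(hv1 x v).fderiv]; rfl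
  -- gradients rewritten via fderiv
  have hgx : ∀ x v : Vec d, ⟪v, gradx fh x v⟫ = fderiv ℝ fh (x, v) (v, 0) := by
    intro x v
    rw [← hx1' x v v, real_inner_comm]
    exact InnerProductSpace.toDual_symm_apply
  have hgv : ∀ x v : Vec d, ⟪En x + En1 x, gradv fh x v⟫
      = fderiv ℝ fh (x, v) (0, En x + En1 x) := by
    intro x v
    rw [← hv1' x v (En x + En1 x), real_inner_comm]
    exact InnerProductSpace.toDual_symm_apply
  -- supports
  have hKc : IsCompact (tsupport fh) := hsupp
  have hKv : IsCompact (Prod.snd '' tsupport fh) := hKc.image continuous_snd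
  have hKx : IsCompact (Prod.fst '' tsupport fh) := hKc.image continuous_fst
  have hfh0 : ∀ {p : Vec d × Vec d}, p ∉ tsupport fh → fh p = 0 := fun hp =>
    image_eq_zero_of_notMem_tsupport hp
  have hD0 : ∀ {p : Vec d × Vec d}, p ∉ tsupport fh → fderiv ℝ fh p = 0 := by
    intro p hp
    by_contra h
    exact hp (support_fderiv_subset (𝕜 := ℝ) h)
  have hnv : ∀ {x v : Vec d}, v ∉ Prod.snd '' tsupport fh → (x, v) ∉ tsupport fh := by
    intro x v hv hmem; exact hv ⟨(x, v), hmem, rfl⟩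
  have hnx : ∀ {x v : Vec d}, x ∉ Prod.fst '' tsupport fh → (x, v) ∉ tsupport fh := by
    intro x v hx hmem; exact hx ⟨(x, v), hmem, rfl⟩
  -- integrabilities in v at fixed x
  have i1 : ∀ x : Vec d, Integrable (fun v => fderiv ℝ fh (x, v) (v, 0) * ‖v‖ ^ 2) := by
    intro x
    refine Continuous.integrable_of_hasCompactSupport
      (((hDc.comp (continuous_const.prodMk continuous_id)).clm_apply
        (continuous_id.prodMk continuous_const)).mul hgc) ?_
    exact HasCompactSupport.intro hKv fun v hv => by rw [hD0 (hnv hv)]; simp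
  have i2 : ∀ x : Vec d, Integrable
      (fun v => fderiv ℝ fh (x, v) (0, En x + En1 x) * ‖v‖ ^ 2) := by
    intro x
    refine Continuous.integrable_of_hasCompactSupport
      (((hDc.comp (continuous_const.prodMk continuous_id)).clm_apply
        continuous_const).mul hgc) ?_
    exact HasCompactSupport.intro hKv fun v hv => by rw [hD0 (hnv hv)]; simp
  have i3 : ∀ x : Vec d, Integrable
      (fun v => fh (x, v) * fderiv ℝ (fun w : Vec d => ‖w‖ ^ 2) v (En x + En1 x)) := by
    intro x
    refine Continuous.integrable_of_hasCompactSupport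
      (((hfc.comp (continuous_const.prodMk continuous_id)).mul
        (hgfdc.clm_apply continuous_const))) ?_
    exact HasCompactSupport.intro hKv fun v hv => by rw [hfh0 (hnv hv)]; simp
  have i4 : ∀ x : Vec d, Integrable (fun v => fh (x, v) * ‖v‖ ^ 2) := by
    intro x
    refine Continuous.integrable_of_hasCompactSupport
      ((hfc.comp (continuous_const.prodMk continuous_id)).mul hgc) ?_
    exact HasCompactSupport.intro hKv fun v hv => by rw [hfh0 (hnv hv)]; simp
  have i5 : ∀ x : Vec d, Integrable (fun v => fh (x, v) • v) := by
    intro x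
    refine Continuous.integrable_of_hasCompactSupport
      ((hfc.comp (continuous_const.prodMk continuous_id)).smul continuous_id) ?_
    exact HasCompactSupport.intro hKv fun v hv => by rw [hfh0 (hnv hv)]; simp
  -- product integrability
  have I1 : Integrable (fun p : Vec d × Vec d => fderiv ℝ fh p (p.2, 0) * ‖p.2‖ ^ 2) := by
    refine Continuous.integrable_of_hasCompactSupport
      ((hDc.clm_apply (continuous_snd.prodMk continuous_const)).mul
        ((continuous_snd.norm).pow 2)) ?_
    exact HasCompactSupport.intro hKc fun p hp => by rw [hD0 hp]; simp
  have I2 : Integrable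
      (fun p : Vec d × Vec d => fderiv ℝ fh p (0, En p.1 + En1 p.1) * ‖p.2‖ ^ 2) := by
    refine Continuous.integrable_of_hasCompactSupport
      ((hDc.clm_apply (continuous_const.prodMk (hEc.comp continuous_fst))).mul
        ((continuous_snd.norm).pow 2)) ?_
    exact HasCompactSupport.intro hKc fun p hp => by rw [hD0 hp]; simp
  have I1' : Integrable (fun p : Vec d × Vec d => fderiv ℝ fh p (p.2, 0) * ‖p.2‖ ^ 2)
      ((volume : Measure (Vec d)).prod volume) := by
    rw [← Measure.volume_eq_prod]; exact I1
  have I2' : Integrable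
      (fun p : Vec d × Vec d => fderiv ℝ fh p (0, En p.1 + En1 p.1) * ‖p.2‖ ^ 2)
      ((volume : Measure (Vec d)).prod volume) := by
    rw [← Measure.volume_eq_prod]; exact I2
  -- Term 1 vanishes
  have T1 : (∫ x, ∫ v, fderiv ℝ fh (x, v) (v, 0) * ‖v‖ ^ 2) = 0 := by
    have hswap := integral_integral_swap
      (f := fun x v : Vec d => fderiv ℝ fh (x, v) (v, 0) * ‖v‖ ^ 2) I1'
    rw [hswap]
    have hz : ∀ v : Vec d, (∫ x, fderiv ℝ fh (x, v) (v, 0) * ‖v‖ ^ 2) = 0 := by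
      intro v
      have hfg' : Integrable
          (fun x => ‖v‖ ^ 2 * fderiv ℝ (fun y => fh (y, v)) x v) := by
        simp only [hx1']
        refine Continuous.integrable_of_hasCompactSupport
          (continuous_const.mul ((hDc.comp (continuous_id.prodMk continuous_const)).clm_apply
            continuous_const)) ?_
        exact HasCompactSupport.intro hKx fun x hx => by rw [hD0 (hnx hx)]; simp
      have hfg : Integrable (fun x => ‖v‖ ^ 2 * fh (x, v)) := by
        refine Continuous.integrable_of_hasCompactSupport
          (continuous_const.mul (hfc.comp (continuous_id.prodMk continuous_const))) ?_
        exact HasCompactSupport.intro hKx fun x hx => by rw [hfh0 (hnx hx)]; simp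
      have hf'g : Integrable
          (fun x : Vec d => fderiv ℝ (fun _ : Vec d => ‖v‖ ^ 2) x v * fh (x, v)) := by
        have : (fun x : Vec d => fderiv ℝ (fun _ : Vec d => ‖v‖ ^ 2) x v * fh (x, v))
            = fun _ => 0 := by
          funext x; simp [fderiv_const]
        rw [this]; exact integrable_zero _ _ _
      have hIBP := integral_mul_fderiv_eq_neg_fderiv_mul_of_integrable
        (f := fun _ : Vec d => ‖v‖ ^ 2) (g := fun y => fh (y, v)) (v := v)
        hf'g hfg' hfg (fun x _ => differentiableAt_const _) (fun x _ => (hx1 x v).differentiableAt)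
      have hz2 : (∫ x : Vec d, fderiv ℝ (fun _ : Vec d => ‖v‖ ^ 2) x v * fh (x, v)) = 0 := by
        have : (fun x : Vec d => fderiv ℝ (fun _ : Vec d => ‖v‖ ^ 2) x v * fh (x, v))
            = fun _ => 0 := by
          funext x; simp [fderiv_const]
        rw [this]; simp
      have hIBP' : (∫ x, ‖v‖ ^ 2 * fderiv ℝ (fun y => fh (y, v)) x v) = 0 := by
        rw [hIBP, hz2, neg_zero]
      calc (∫ x, fderiv ℝ fh (x, v) (v, 0) * ‖v‖ ^ 2)
          = ∫ x, ‖v‖ ^ 2 * fderiv ℝ (fun y => fh (y, v)) x v := by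
            refine integral_congr_ae (Filter.Eventually.of_forall fun x => ?_)
            dsimp only
            rw [hx1' x v v, mul_comm]
        _ = 0 := hIBP'
    rw [funext hz]
    simp
  -- Term 2 via integration by parts in v
  have T2 : ∀ x : Vec d, (∫ v, fderiv ℝ fh (x, v) (0, En x + En1 x) * ‖v‖ ^ 2)
      = -2 * ⟪En x + En1 x, Jcur fh x⟫ := by
    intro x
    have hf'g : Integrable
        (fun v => fderiv ℝ (fun w => fh (x, w)) v (En x + En1 x) * ‖v‖ ^ 2) := by
      simp only [hv1']; exact i2 x
    have hIBP := integral_mul_fderiv_eq_neg_fderiv_mul_of_integrable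
      (f := fun w => fh (x, w)) (g := fun w : Vec d => ‖w‖ ^ 2) (v := En x + En1 x)
      hf'g (i3 x) (i4 x) (fun v _ => (hv1 x v).differentiableAt) (fun v _ => hgdiff v)
    simp only [hv1'] at hIBP
    have key : (∫ v, fderiv ℝ fh (x, v) (0, En x + En1 x) * ‖v‖ ^ 2)
        = - ∫ v, fh (x, v) * fderiv ℝ (fun w : Vec d => ‖w‖ ^ 2) v (En x + En1 x) := by
      rw [hIBP]; ring
    rw [key]
    have h1 : (∫ v, fh (x, v) * fderiv ℝ (fun w : Vec d => ‖w‖ ^ 2) v (En x + En1 x))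
        = 2 * ∫ v, ⟪En x + En1 x, fh (x, v) • v⟫ := by
      rw [← integral_const_mul]
      refine integral_congr_ae (Filter.Eventually.of_forall fun v => ?_)
      dsimp only
      rw [hgfd, real_inner_smul_right, real_inner_comm]; ring
    rw [h1, integral_inner (i5 x) (En x + En1 x)]
    rw [show Jcur fh x = ∫ v, fh (x, v) • v from rfl]
    ring
  -- pointwise identity from the scheme
  have main : ∀ x v : Vec d, (fn1 (x, v) - fn (x, v)) * ‖v‖ ^ 2
      = -Δt * (fderiv ℝ fh (x, v) (v, 0) * ‖v‖ ^ 2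
        + (1 / 2) * (fderiv ℝ fh (x, v) (0, En x + En1 x) * ‖v‖ ^ 2)) := by
    intro x v
    rw [h3 x v, hgx x v, hgv x v]; ring
  calc (∫ x, ∫ v, (fn1 (x, v) - fn (x, v)) * ‖v‖ ^ 2)
      = ∫ x, ∫ v, -Δt * (fderiv ℝ fh (x, v) (v, 0) * ‖v‖ ^ 2
          + (1 / 2) * (fderiv ℝ fh (x, v) (0, En x + En1 x) * ‖v‖ ^ 2)) := by
        simp only [main]
    _ = ∫ x, -Δt * ((∫ v, fderiv ℝ fh (x, v) (v, 0) * ‖v‖ ^ 2)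
          + (1 / 2) * ∫ v, fderiv ℝ fh (x, v) (0, En x + En1 x) * ‖v‖ ^ 2) := by
        refine integral_congr_ae (Filter.Eventually.of_forall fun x => ?_)
        dsimp only
        rw [integral_const_mul, integral_add (i1 x) ((i2 x).const_mul (1 / 2)),
          integral_const_mul]
    _ = -Δt * ((∫ x, ∫ v, fderiv ℝ fh (x, v) (v, 0) * ‖v‖ ^ 2)
          + (1 / 2) * ∫ x, ∫ v, fderiv ℝ fh (x, v) (0, En x + En1 x) * ‖v‖ ^ 2) := by
        rw [integral_const_mul, integral_add I1'.integral_prod_left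
          (I2'.integral_prod_left.const_mul (1 / 2)), integral_const_mul]
    _ = -Δt * (0 + (1 / 2) * ∫ x, -2 * ⟪En x + En1 x, Jcur fh x⟫) := by
        rw [T1]
        have h2 : (∫ x, ∫ v, fderiv ℝ fh (x, v) (0, En x + En1 x) * ‖v‖ ^ 2)
            = ∫ x, -2 * ⟪En x + En1 x, Jcur fh x⟫ :=
          integral_congr_ae (Filter.Eventually.of_forall fun x => T2 x)
        rw [h2]
    _ = Δt * ∫ x, ⟪En x + En1 x, Jcur fh x⟫ := by
        rw [integral_const_mul]; ring
end
end

section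
/- Let Δt ∈ ℝ, let f^n, f^{n+1} be phase-space densities and E^n, E^{n+1} electric fields satisfying the Scheme-b relations pointwise: f^{n+1}(x,v) = f^n(x,v) − (Δt/2)( E^n(x) + E^{n+1}(x) )·∇_v g(x,v) where g = (f^n + f^{n+1})/2, and E^{n+1}(x) = E^n(x) − (Δt/2)( J_{f^n}(x) + J_{f^{n+1}}(x) ). Then the total energy is conserved: K(f^{n+1}) + W(E^{n+1}) = K(f^n) + W(E^n). -/
open MeasureTheory
open scoped RealInnerProductSpace

noncomputable section

section Aux
variable {d : ℕ}

lemma inner_gradient (g : Vec d → ℝ) (v A : Vec d) :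
    ⟪A, gradient g v⟫ = fderiv ℝ g v A := by
  rw [real_inner_comm]
  exact InnerProductSpace.toDual_symm_apply

lemma hcs_slice {g : Vec d × Vec d → ℝ} (hg : HasCompactSupport g) (x : Vec d) :
    HasCompactSupport (fun v => g (x, v)) := by
  apply HasCompactSupport.intro (hg.image continuous_snd)
  intro v hv
  by_contra h
  exact hv ⟨(x, v), subset_tsupport _ h, rfl⟩

lemma contDiff_slice {g : Vec d × Vec d → ℝ} (hg : ContDiff ℝ (⊤ : ℕ∞) g) (x : Vec d) :
    ContDiff ℝ (⊤ : ℕ∞) (fun v => g (x, v)) :=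
  hg.comp (contDiff_const.prodMk contDiff_id)

lemma integral_fderiv_apply_s9 (h : Vec d → ℝ) (hh : ContDiff ℝ (⊤ : ℕ∞) h)
    (hs : HasCompactSupport h) (A : Vec d) :
    ∫ v, fderiv ℝ h v A = 0 := by
  obtain ⟨C, hC⟩ := hh.lipschitzWith_of_hasCompactSupport hs (by simp)
  have key := LipschitzWith.integral_lineDeriv_mul_eq (μ := volume)
    (LipschitzWith.const (1 : ℝ)) hC hs (-A)
  have hL : ∀ x : Vec d, lineDeriv ℝ (fun _ : Vec d => (1 : ℝ)) x (-A) = 0 := by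
    intro x
    simp [lineDeriv]
  have hR : ∀ x : Vec d, lineDeriv ℝ h x (-(-A)) = fderiv ℝ h x A := by
    intro x
    rw [neg_neg, (hh.differentiable (by simp) x).lineDeriv_eq_fderiv]
  simp only [hL, hR, Function.const_apply, zero_mul, mul_one, integral_zero] at key
  exact key.symm

lemma integrable_fderiv_apply_weight (g : Vec d → ℝ) (hg : ContDiff ℝ (⊤ : ℕ∞) g)
    (hs : HasCompactSupport g) (A : Vec d) :
    Integrable (fun v => fderiv ℝ g v A * ‖v‖ ^ 2) := by
  apply Continuous.integrable_of_hasCompactSupport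
  · exact ((hg.continuous_fderiv (by simp)).clm_apply continuous_const).mul
      (continuous_norm.pow 2)
  · exact (hs.fderiv_apply ℝ A).mul_right

lemma ibp_weight (g : Vec d → ℝ) (hg : ContDiff ℝ (⊤ : ℕ∞) g) (hs : HasCompactSupport g)
    (A : Vec d) :
    ∫ v, ⟪A, gradient g v⟫ * ‖v‖ ^ 2 = (-2) * ∫ v, g v * ⟪A, v⟫ := by
  have hh : ContDiff ℝ (⊤ : ℕ∞) (fun v : Vec d => g v * ‖v‖ ^ 2) :=
    hg.mul (contDiff_norm_sq ℝ)
  have hhs : HasCompactSupport (fun v : Vec d => g v * ‖v‖ ^ 2) := hs.mul_right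
  have hfd : ∀ v : Vec d, fderiv ℝ (fun w : Vec d => g w * ‖w‖ ^ 2) v A
      = fderiv ℝ g v A * ‖v‖ ^ 2 + g v * (2 * ⟪A, v⟫) := by
    intro v
    have h1 : HasFDerivAt g (fderiv ℝ g v) v :=
      ((hg.differentiable (by simp)) v).hasFDerivAt
    have h2 : HasFDerivAt (fun w : Vec d => ‖w‖ ^ 2) (2 • (innerSL ℝ v)) v := by
      simpa using (hasFDerivAt_id v).norm_sq
    have h3 : HasFDerivAt (fun w : Vec d => g w * ‖w‖ ^ 2) _ v := h1.mul h2
    rw [h3.fderiv]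
    simp only [ContinuousLinearMap.add_apply, ContinuousLinearMap.smul_apply, innerSL_apply_apply,
      smul_eq_mul]
    rw [real_inner_comm A v]
    ring
  have hzero := integral_fderiv_apply_s9 _ hh hhs A
  have hint1 := integrable_fderiv_apply_weight g hg hs A
  have hint2 : Integrable (fun v : Vec d => g v * (2 * ⟪A, v⟫)) := by
    apply Continuous.integrable_of_hasCompactSupport
    · exact (hg.continuous).mul (continuous_const.mul (continuous_const.inner continuous_id))
    · exact hs.mul_right
  rw [funext hfd, integral_add hint1 hint2] at hzero
  have : ∫ v, g v * (2 * ⟪A, v⟫) = 2 * ∫ v, g v * ⟪A, v⟫ := by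
    rw [← integral_const_mul]
    congr 1; ext v; ring
  rw [this] at hzero
  have hig : ∀ v : Vec d, ⟪A, gradient g v⟫ * ‖v‖ ^ 2 = fderiv ℝ g v A * ‖v‖ ^ 2 :=
    fun v => by rw [inner_gradient]
  rw [funext hig]
  linarith

end Aux

/-- total energy conservation for the implicit midpoint Scheme-b. -/
theorem schemeb_total_energy_conservation
    {d : ℕ} (hd : 1 ≤ d) (Δt : ℝ)
    (fn fn1 : Vec d × Vec d → ℝ) (En En1 : Vec d → Vec d)
    (hfn : IsDensity fn) (hfn1 : IsDensity fn1)
    (hEn : IsEField En) (hEn1 : IsEField En1)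
    (h1 : ∀ x v : Vec d, fn1 (x, v) =
      fn (x, v) - (Δt / 2) * ⟪En x + En1 x, gradv (fun p => (fn p + fn1 p) / 2) x v⟫)
    (h2 : ∀ x : Vec d, En1 x = En x - (Δt / 2) • (Jcur fn x + Jcur fn1 x)) :
    Kin fn1 + Wel En1 = Kin fn + Wel En := by
  obtain ⟨hfnS, hfnC⟩ := hfn
  obtain ⟨hfn1S, hfn1C⟩ := hfn1
  set A : Vec d → Vec d := fun x => En x + En1 x with hA
  have hAcont : Continuous A := hEn.1.add hEn1.1
  set Φ : Vec d → ℝ := fun x => ∫ v, (fn (x, v) + fn1 (x, v)) * ⟪A x, v⟫ with hΦdef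
  -- integrability of Φ and of the inner kinetic integral, via the product measure
  have hH2 : Integrable (fun p : Vec d × Vec d => (fn p + fn1 p) * ⟪A p.1, p.2⟫) := by
    apply Continuous.integrable_of_hasCompactSupport
    · exact (hfnS.continuous.add hfn1S.continuous).mul
        ((hAcont.comp continuous_fst).inner continuous_snd)
    · exact (hfnC.add hfn1C).mul_right
  have hΦint : Integrable Φ := by
    rw [MeasureTheory.Measure.volume_eq_prod] at hH2
    exact hH2.integral_prod_left
  have hH1 : Integrable (fun p : Vec d × Vec d => fn p * ‖p.2‖ ^ 2) := by
    apply Continuous.integrable_of_hasCompactSupport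
    · exact hfnS.continuous.mul ((continuous_norm.comp continuous_snd).pow 2)
    · exact hfnC.mul_right
  have hF0int : Integrable (fun x : Vec d => ∫ v, fn (x, v) * ‖v‖ ^ 2) := by
    rw [MeasureTheory.Measure.volume_eq_prod] at hH1
    exact hH1.integral_prod_left
  -- the kinetic step
  have stepK : ∀ x : Vec d, ∫ v, fn1 (x, v) * ‖v‖ ^ 2
      = (∫ v, fn (x, v) * ‖v‖ ^ 2) + (Δt / 2) * Φ x := by
    intro x
    set gx : Vec d → ℝ := fun w => (fn (x, w) + fn1 (x, w)) / 2 with hgx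
    have hgxS : ContDiff ℝ (⊤ : ℕ∞) gx :=
      ((contDiff_slice hfnS x).add (contDiff_slice hfn1S x)).div_const 2
    have hgxC : HasCompactSupport gx := by
      have h := (hcs_slice hfnC x).add (hcs_slice hfn1C x)
      exact h.comp_left (g := fun r : ℝ => r / 2) (by simp)
    have hibp := ibp_weight gx hgxS hgxC (A x)
    have hpt : ∀ v : Vec d, fn1 (x, v) * ‖v‖ ^ 2
        = fn (x, v) * ‖v‖ ^ 2 - (Δt / 2) * (⟪A x, gradient gx v⟫ * ‖v‖ ^ 2) := by
      intro v
      have := h1 x v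
      rw [show gradv (fun p => (fn p + fn1 p) / 2) x v = gradient gx v from rfl] at this
      rw [this]; ring
    have int1 : Integrable (fun v : Vec d => fn (x, v) * ‖v‖ ^ 2) := by
      apply Continuous.integrable_of_hasCompactSupport
      · exact (hfnS.continuous.comp (continuous_const.prodMk continuous_id)).mul
          (continuous_norm.pow 2)
      · exact (hcs_slice hfnC x).mul_right
    have int3 : Integrable (fun v : Vec d => ⟪A x, gradient gx v⟫ * ‖v‖ ^ 2) := by
      have h := integrable_fderiv_apply_weight gx hgxS hgxC (A x)
      have e : (fun v : Vec d => ⟪A x, gradient gx v⟫ * ‖v‖ ^ 2)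
          = fun v : Vec d => fderiv ℝ gx v (A x) * ‖v‖ ^ 2 :=
        funext fun v => by rw [inner_gradient]
      rwa [e]
    calc ∫ v, fn1 (x, v) * ‖v‖ ^ 2
        = ∫ v, (fn (x, v) * ‖v‖ ^ 2 - (Δt / 2) * (⟪A x, gradient gx v⟫ * ‖v‖ ^ 2)) := by
          simp only [hpt]
      _ = (∫ v, fn (x, v) * ‖v‖ ^ 2)
            - (Δt / 2) * ∫ v, ⟪A x, gradient gx v⟫ * ‖v‖ ^ 2 := by
          rw [integral_sub int1 (int3.const_mul _), integral_const_mul]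
      _ = (∫ v, fn (x, v) * ‖v‖ ^ 2) + (Δt / 2) * Φ x := by
          rw [hibp]
          have hΦx : Φ x = 2 * ∫ v, gx v * ⟪A x, v⟫ := by
            simp only [hΦdef, ← integral_const_mul]
            apply integral_congr_ae
            filter_upwards with v
            simp only [hgx]
            ring
          rw [hΦx]
          ring
  have hKin : Kin fn1 = Kin fn + (Δt / 2) * ∫ x, Φ x := by
    unfold Kin
    simp only [stepK]
    rw [integral_add hF0int (hΦint.const_mul _), integral_const_mul]
  -- the electric step
  have hJ : ∀ x : Vec d, ⟪A x, Jcur fn x + Jcur fn1 x⟫ = Φ x := by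
    intro x
    have i1 : Integrable (fun v : Vec d => fn (x, v) • v) := by
      apply Continuous.integrable_of_hasCompactSupport
      · exact (hfnS.continuous.comp (continuous_const.prodMk continuous_id)).smul
          continuous_id
      · exact (hcs_slice hfnC x).smul_right
    have i1' : Integrable (fun v : Vec d => fn1 (x, v) • v) := by
      apply Continuous.integrable_of_hasCompactSupport
      · exact (hfn1S.continuous.comp (continuous_const.prodMk continuous_id)).smul
          continuous_id
      · exact (hcs_slice hfn1C x).smul_right
    have e1 : ⟪A x, Jcur fn x⟫ = ∫ v, fn (x, v) * ⟪A x, v⟫ := by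
      rw [Jcur, ← integral_inner i1 (A x)]
      simp only [real_inner_smul_right]
    have e2 : ⟪A x, Jcur fn1 x⟫ = ∫ v, fn1 (x, v) * ⟪A x, v⟫ := by
      rw [Jcur, ← integral_inner i1' (A x)]
      simp only [real_inner_smul_right]
    have j1 : Integrable (fun v : Vec d => fn (x, v) * ⟪A x, v⟫) := by
      apply Continuous.integrable_of_hasCompactSupport
      · exact (hfnS.continuous.comp (continuous_const.prodMk continuous_id)).mul
          (continuous_const.inner continuous_id)
      · exact (hcs_slice hfnC x).mul_right
    have j2 : Integrable (fun v : Vec d => fn1 (x, v) * ⟪A x, v⟫) := by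
      apply Continuous.integrable_of_hasCompactSupport
      · exact (hfn1S.continuous.comp (continuous_const.prodMk continuous_id)).mul
          (continuous_const.inner continuous_id)
      · exact (hcs_slice hfn1C x).mul_right
    simp only [inner_add_right, e1, e2, hΦdef]
    rw [show (fun v : Vec d => (fn (x, v) + fn1 (x, v)) * ⟪A x, v⟫)
        = fun v : Vec d => fn (x, v) * ⟪A x, v⟫ + fn1 (x, v) * ⟪A x, v⟫ from
      funext fun v => by ring]
    rw [integral_add j1 j2]
  have keyalg : ∀ (a c : Vec d) (s : ℝ),
      ‖a - s • c‖ ^ 2 = ‖a‖ ^ 2 - s * ⟪a + (a - s • c), c⟫ := by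
    intro a c s
    rw [norm_sub_sq_real, inner_add_left, inner_sub_left, real_inner_smul_left,
      real_inner_smul_right, norm_smul, Real.norm_eq_abs, mul_pow, sq_abs,
      real_inner_self_eq_norm_sq]
    ring
  have hW : ∀ x : Vec d, ‖En1 x‖ ^ 2 = ‖En x‖ ^ 2 - (Δt / 2) * Φ x := by
    intro x
    calc ‖En1 x‖ ^ 2 = ‖En x - (Δt / 2) • (Jcur fn x + Jcur fn1 x)‖ ^ 2 := by rw [h2 x]
      _ = ‖En x‖ ^ 2 - (Δt / 2) *
            ⟪En x + (En x - (Δt / 2) • (Jcur fn x + Jcur fn1 x)),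
              Jcur fn x + Jcur fn1 x⟫ := keyalg _ _ _
      _ = ‖En x‖ ^ 2 - (Δt / 2) * ⟪A x, Jcur fn x + Jcur fn1 x⟫ := by rw [← h2 x]
      _ = ‖En x‖ ^ 2 - (Δt / 2) * Φ x := by rw [hJ x]
  have hWel : Wel En1 = Wel En - (Δt / 2) * ∫ x, Φ x := by
    unfold Wel
    simp only [hW]
    rw [integral_sub hEn.2 (hΦint.const_mul _), integral_const_mul]
  rw [hKin, hWel]
  ring
end
end

section
/- Let Δt ∈ ℝ, let f^n, f^{n+1/2}, f^{n+1} be phase-space densities and E^n, E^{n+1} electric fields such that pointwise f^{n+1}(x,v) = f^n(x,v) − Δt( v·∇_x f^{n+1/2}(x,v) + (1/2)(E^n(x)+E^{n+1}(x))·∇_v f^{n+1/2}(x,v) ). Then the discrete charge continuity equation holds: for every x ∈ ℝ^d, ρ_{f^{n+1}}(x) = ρ_{f^n}(x) − Δt · div_x J_{f^{n+1/2}}(x), where div_x denotes the divergence in x. -/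
open MeasureTheory
open scoped RealInnerProductSpace

set_option maxHeartbeats 1000000
set_option synthInstance.maxHeartbeats 400000

noncomputable section

/- ### Auxiliary lemmas -/

section Aux

variable {d : ℕ}

/-- Inner product against a gradient is the Fréchet derivative. -/
lemma inner_gradient_eq_fderiv (g : Vec d → ℝ) (x c : Vec d) (hg : DifferentiableAt ℝ g x) :
    ⟪c, gradient g x⟫ = fderiv ℝ g x c := by
  rw [real_inner_comm]
  exact InnerProductSpace.toDual_symm_apply

/-- Decomposition of a linear functional on Euclidean space along the basis. -/
lemma clm_sum_coords (L : Vec d →L[ℝ] ℝ) (v : Vec d) :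
    ∑ i : Fin d, L (EuclideanSpace.single i 1) * v i = L v := by
  have hv : v = ∑ i : Fin d, v i • EuclideanSpace.single i (1 : ℝ) := by
    have := (EuclideanSpace.basisFun (Fin d) ℝ).sum_repr v
    simpa [EuclideanSpace.basisFun_apply, EuclideanSpace.basisFun_repr] using this.symm
  conv_rhs => rw [hv]
  rw [map_sum]
  simp [L.map_smul, smul_eq_mul, mul_comm]

/-- Coordinates of vector-valued integrals. -/
lemma integral_coord (g : Vec d → Vec d) (hg : Integrable g) (i : Fin d) :
    (∫ v, g v) i = ∫ v, g v i := by
  have h := integral_inner (𝕜 := ℝ) hg (EuclideanSpace.single i (1 : ℝ))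
  simpa [EuclideanSpace.inner_single_left] using h.symm

end Aux

/-- discrete charge continuity `ρ^{n+1} = ρ^n − Δt ∇_x·J^{n+1/2}` for Scheme-1. -/
theorem scheme1_charge_continuity
    {d : ℕ} (hd : 1 ≤ d) (Δt : ℝ)
    (fn fh fn1 : Vec d × Vec d → ℝ) (En En1 : Vec d → Vec d)
    (hfn : IsDensity fn) (hfh : IsDensity fh) (hfn1 : IsDensity fn1)
    (hEn : Continuous En) (hEn1 : Continuous En1)
    (h3 : ∀ x v : Vec d, fn1 (x, v) =
      fn (x, v) - Δt * (⟪v, gradx fh x v⟫ +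
        (1 / 2) * ⟪En x + En1 x, gradv fh x v⟫)) :
    ∀ x : Vec d, rho fn1 x = rho fn x - Δt * divg (Jcur fh) x := by
  obtain ⟨hS, hK⟩ := hfh
  intro x
  set c : Vec d := En x + En1 x with hc
  -- basic facts about fh
  have hdiff : Differentiable ℝ fh := hS.differentiable (by simp)
  have hfdc : Continuous (fderiv ℝ fh) := hS.continuous_fderiv (by simp)
  set K : Set (Vec d) := Prod.snd '' tsupport fh with hKdef
  have hKc : IsCompact K := hK.image continuous_snd
  have hKm : MeasurableSet K := hKc.isClosed.measurableSet
  have hKz : ∀ v ∉ K, ∀ y : Vec d, fderiv ℝ fh (y, v) = 0 := by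
    intro v hv y
    by_contra h
    exact hv ⟨(y, v), support_fderiv_subset ℝ h, rfl⟩
  have hKzf : ∀ v ∉ K, ∀ y : Vec d, fh (y, v) = 0 := by
    intro v hv y
    by_contra h
    exact hv ⟨(y, v), subset_tsupport _ h, rfl⟩
  -- derivatives of slices
  have hx_slice : ∀ (y v : Vec d), HasFDerivAt (fun y => fh (y, v))
      ((fderiv ℝ fh (y, v)).comp (ContinuousLinearMap.inl ℝ (Vec d) (Vec d))) y :=
    fun y v => (hdiff (y, v)).hasFDerivAt.comp y (hasFDerivAt_prodMk_left y v)
  have hv_slice : ∀ (y v : Vec d), HasFDerivAt (fun w => fh (y, w))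
      ((fderiv ℝ fh (y, v)).comp (ContinuousLinearMap.inr ℝ (Vec d) (Vec d))) v :=
    fun y v => (hdiff (y, v)).hasFDerivAt.comp v (hasFDerivAt_prodMk_right y v)
  -- identification of the two inner-product terms
  have hA : ∀ v : Vec d, ⟪v, gradx fh x v⟫ =
      fderiv ℝ fh (x, v) ((v, 0) : Vec d × Vec d) := by
    intro v
    rw [gradx, inner_gradient_eq_fderiv _ _ _ (hx_slice x v).differentiableAt,
      (hx_slice x v).fderiv]
    simp
  have hB : ∀ v : Vec d, ⟪c, gradv fh x v⟫ =
      fderiv ℝ (fun w => fh (x, w)) v c := by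
    intro v
    rw [gradv, inner_gradient_eq_fderiv _ _ _ (hv_slice x v).differentiableAt]
  -- integrabilities
  have hint_fn : Integrable (fun v => fn (x, v)) := by
    apply Continuous.integrable_of_hasCompactSupport
    · exact hfn.1.continuous.comp (continuous_const.prodMk continuous_id)
    · exact HasCompactSupport.intro (hfn.2.image continuous_snd)
        (fun v hv => by
          by_contra h
          exact hv ⟨(x, v), subset_tsupport _ h, rfl⟩)
  have hint_fn1 : Integrable (fun v => fn1 (x, v)) := by
    apply Continuous.integrable_of_hasCompactSupport
    · exact hfn1.1.continuous.comp (continuous_const.prodMk continuous_id)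
    · exact HasCompactSupport.intro (hfn1.2.image continuous_snd)
        (fun v hv => by
          by_contra h
          exact hv ⟨(x, v), subset_tsupport _ h, rfl⟩)
  have hcont_fd : Continuous (fun v : Vec d => fderiv ℝ fh (x, v)) :=
    hfdc.comp (continuous_const.prodMk continuous_id)
  have hint_A : Integrable (fun v : Vec d => fderiv ℝ fh (x, v) ((v, 0) : Vec d × Vec d)) := by
    apply Continuous.integrable_of_hasCompactSupport
    · exact hcont_fd.clm_apply (continuous_id.prodMk continuous_const)
    · exact HasCompactSupport.intro hKc (fun v hv => by rw [hKz v hv x]; simp)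
  have hBeq : ∀ v : Vec d, fderiv ℝ (fun w => fh (x, w)) v c =
      fderiv ℝ fh (x, v) ((0, c) : Vec d × Vec d) := by
    intro v
    rw [(hv_slice x v).fderiv]
    simp
  have hint_B : Integrable (fun v : Vec d => fderiv ℝ (fun w => fh (x, w)) v c) := by
    simp only [hBeq]
    apply Continuous.integrable_of_hasCompactSupport
    · exact hcont_fd.clm_apply continuous_const
    · exact HasCompactSupport.intro hKc (fun v hv => by rw [hKz v hv x]; simp)
  -- the v-gradient term integrates to zero
  have hBzero : (∫ v, fderiv ℝ (fun w => fh (x, w)) v c) = 0 := by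
    have hg : Differentiable ℝ (fun w => fh (x, w)) :=
      fun w => (hv_slice x w).differentiableAt
    have hgint : Integrable (fun w : Vec d => fh (x, w)) := by
      apply Continuous.integrable_of_hasCompactSupport
      · exact hS.continuous.comp (continuous_const.prodMk continuous_id)
      · exact HasCompactSupport.intro hKc (fun v hv => hKzf v hv x)
    have h1 : Integrable (fun v : Vec d =>
        fderiv ℝ (fun _ : Vec d => (1 : ℝ)) v c * fh (x, v)) := by
      have : (fun v : Vec d => fderiv ℝ (fun _ : Vec d => (1 : ℝ)) v c * fh (x, v))
          = fun _ => 0 := by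
        funext v; simp [fderiv_const]
      rw [this]; exact integrable_zero _ _ _
    have h2 : Integrable (fun v : Vec d =>
        (1 : ℝ) * fderiv ℝ (fun w => fh (x, w)) v c) := by simpa using hint_B
    have h3' : Integrable (fun v : Vec d => (1 : ℝ) * fh (x, v)) := by simpa using hgint
    have := integral_mul_fderiv_eq_neg_fderiv_mul_of_integrable h1 h2 h3'
      (fun y _ => differentiable_const (1 : ℝ) y) (fun y _ => hg y)
    simpa [fderiv_const] using this
  -- derivative of the current under the integral sign
  set F' : Vec d → Vec d → (Vec d →L[ℝ] Vec d) := fun y v =>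
    ((fderiv ℝ fh (y, v)).comp (ContinuousLinearMap.inl ℝ (Vec d) (Vec d))).smulRight v
    with hF'def
  obtain ⟨C0, hC0⟩ := (hK.fderiv ℝ).exists_bound_of_continuous hfdc
  set C : ℝ := max C0 0 with hCdef
  have hcompnorm : ∀ (y v : Vec d),
      ‖(fderiv ℝ fh (y, v)).comp (ContinuousLinearMap.inl ℝ (Vec d) (Vec d))‖ ≤ C := by
    intro y v
    apply ContinuousLinearMap.opNorm_le_bound _ (le_max_right _ _)
    intro u
    have h1 : ‖((u, 0) : Vec d × Vec d)‖ = ‖u‖ := by simp [Prod.norm_def]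
    calc ‖(fderiv ℝ fh (y, v)) ((ContinuousLinearMap.inl ℝ (Vec d) (Vec d)) u)‖
        = ‖(fderiv ℝ fh (y, v)) ((u, 0) : Vec d × Vec d)‖ := rfl
      _ ≤ ‖fderiv ℝ fh (y, v)‖ * ‖((u, 0) : Vec d × Vec d)‖ :=
          (fderiv ℝ fh (y, v)).le_opNorm _
      _ ≤ C * ‖u‖ := by
          rw [h1]
          exact mul_le_mul_of_nonneg_right ((hC0 _).trans (le_max_left _ _)) (norm_nonneg _)
  have hF'cont : ∀ y : Vec d, Continuous (fun v => F' y v) := by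
    intro y
    have h1 : Continuous (fun v : Vec d =>
        (fderiv ℝ fh (y, v)).comp (ContinuousLinearMap.inl ℝ (Vec d) (Vec d))) :=
      (hfdc.comp (continuous_const.prodMk continuous_id)).clm_comp continuous_const
    exact (ContinuousLinearMap.smulRightL ℝ (Vec d) (Vec d)).continuous₂.comp
      (h1.prodMk continuous_id)
  have hF'zero : ∀ v ∉ K, ∀ y : Vec d, F' y v = 0 := by
    intro v hv y
    rw [hF'def]
    simp only [hKz v hv y]
    ext u
    simp
  have hF'int : Integrable (fun v => F' x v) :=
    Continuous.integrable_of_hasCompactSupport (hF'cont x)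
      (HasCompactSupport.intro hKc (fun v hv => hF'zero v hv x))
  have hbound_int : Integrable (K.indicator fun v : Vec d => C * ‖v‖) := by
    rw [integrable_indicator_iff hKm]
    exact ((continuous_const.mul continuous_norm).continuousOn).integrableOn_compact hKc
  have key : HasFDerivAt (fun y => ∫ v, fh (y, v) • v) (∫ v, F' x v) x := by
    apply hasFDerivAt_integral_of_dominated_of_fderiv_le (s := Metric.ball x 1)
      (bound := K.indicator fun v : Vec d => C * ‖v‖) (Metric.ball_mem_nhds x one_pos)
    · filter_upwards with y
      exact ((hS.continuous.comp (continuous_const.prodMk continuous_id)).smul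
        continuous_id).aestronglyMeasurable
    · apply Continuous.integrable_of_hasCompactSupport
      · exact (hS.continuous.comp (continuous_const.prodMk continuous_id)).smul continuous_id
      · exact HasCompactSupport.intro hKc (fun v hv => by rw [hKzf v hv x]; simp)
    · exact (hF'cont x).aestronglyMeasurable
    · filter_upwards with v
      intro y _
      by_cases hv : v ∈ K
      · rw [Set.indicator_of_mem hv]
        calc ‖F' y v‖
            = ‖(fderiv ℝ fh (y, v)).comp (ContinuousLinearMap.inl ℝ (Vec d) (Vec d))‖ * ‖v‖ :=
              ContinuousLinearMap.norm_smulRight_apply _ _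
          _ ≤ C * ‖v‖ := mul_le_mul_of_nonneg_right (hcompnorm y v) (norm_nonneg _)
      · rw [Set.indicator_of_notMem hv, hF'zero v hv y]
        simp
    · exact hbound_int
    · filter_upwards with v
      intro y _
      exact (hx_slice y v).smul_const v
  have hfderiv : fderiv ℝ (Jcur fh) x = ∫ v, F' x v := by
    have : Jcur fh = fun y => ∫ v, fh (y, v) • v := rfl
    rw [this]
    exact key.fderiv
  -- compute the divergence
  have hint_comp : ∀ i : Fin d, Integrable (fun v : Vec d => (F' x v) (EuclideanSpace.single i 1)) := by
    intro i
    exact (hF'int.apply_continuousLinearMap _)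
  have hdivg : divg (Jcur fh) x = ∫ v, fderiv ℝ fh (x, v) ((v, 0) : Vec d × Vec d) := by
    rw [divg]
    have step1 : ∀ i : Fin d,
        fderiv ℝ (Jcur fh) x (EuclideanSpace.single i 1) i
          = ∫ v, (F' x v) (EuclideanSpace.single i 1) i := by
      intro i
      rw [hfderiv, ContinuousLinearMap.integral_apply hF'int]
      exact integral_coord _ (hint_comp i) i
    rw [Finset.sum_congr rfl (fun i _ => step1 i)]
    have hint_i : ∀ i : Fin d, Integrable (fun v : Vec d =>
        (F' x v) (EuclideanSpace.single i 1) i) := by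
      intro i
      apply Continuous.integrable_of_hasCompactSupport
      · exact (EuclideanSpace.proj i).continuous.comp ((hF'cont x).clm_apply continuous_const)
      · exact HasCompactSupport.intro hKc (fun v hv => by rw [hF'zero v hv x]; simp)
    rw [← integral_finset_sum _ (fun i _ => hint_i i)]
    apply integral_congr_ae
    filter_upwards with v
    have : ∀ i : Fin d, (F' x v) (EuclideanSpace.single i 1) i
        = ((fderiv ℝ fh (x, v)).comp (ContinuousLinearMap.inl ℝ (Vec d) (Vec d)))
            (EuclideanSpace.single i 1) * v i := by
      intro i
      rw [hF'def]
      simp [ContinuousLinearMap.smulRight_apply, smul_eq_mul]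
    rw [Finset.sum_congr rfl (fun i _ => this i),
      clm_sum_coords ((fderiv ℝ fh (x, v)).comp (ContinuousLinearMap.inl ℝ (Vec d) (Vec d))) v]
    simp
  -- assemble
  have hsplit : rho fn1 x
      = ∫ v, (fn (x, v) - Δt * (fderiv ℝ fh (x, v) ((v, 0) : Vec d × Vec d)
          + (1 / 2) * fderiv ℝ (fun w => fh (x, w)) v c)) := by
    rw [rho]
    apply integral_congr_ae
    filter_upwards with v
    rw [h3 x v, hA v, hB v]
  have hint_sum : Integrable (fun v : Vec d =>
      fderiv ℝ fh (x, v) ((v, 0) : Vec d × Vec d)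
        + (1 / 2) * fderiv ℝ (fun w => fh (x, w)) v c) :=
    hint_A.add (hint_B.const_mul _)
  rw [hsplit, integral_sub hint_fn (hint_sum.const_mul Δt), integral_const_mul,
    integral_add hint_A (hint_B.const_mul _), integral_const_mul, hBzero, hdivg]
  simp only [rho]
  ring
end
end

section
/- Let K₀ ⊆ ℝ^d × ℝ^d be compact, let f : ℝ × ℝ^d × ℝ^d → ℝ be a C¹ function such that for every t the support of f(t,·,·) is contained in K₀, and let E : ℝ × ℝ^d → ℝ^d be a C¹ function such that W(E(t,·)) = ∫_{ℝ^d}|E(t,x)|² dx is finite for every t. Suppose that for all (t,x,v): ∂_t f(t,x,v) + E(t,x)·∇_v f(t,x,v) = 0 and ∂_t E(t,x) = −J_{f(t,·,·)}(x). Then the total energy t ↦ K(f(t,·,·)) + W(E(t,·)) is constant in t. -/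
open MeasureTheory
open scoped RealInnerProductSpace

noncomputable section

set_option maxHeartbeats 1000000
/-- the split equation (b) `∂ₜ f + E·∇ᵥ f = 0`, `∂ₜ E = −J`
    conserves the total (kinetic plus electric) energy. -/
theorem split_equation_b_conserves_total_energy
    {d : ℕ} (hd : 1 ≤ d) (K₀ : Set (Vec d × Vec d)) (hK₀ : IsCompact K₀)
    (f : ℝ × (Vec d × Vec d) → ℝ) (hf : ContDiff ℝ 1 f)
    (hsupp : ∀ t : ℝ, Function.support (fun p => f (t, p)) ⊆ K₀)
    (E : ℝ × Vec d → Vec d) (hE : ContDiff ℝ 1 E)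
    (hW : ∀ t : ℝ, Integrable (fun x => ‖E (t, x)‖ ^ 2))
    (hpde1 : ∀ (t : ℝ) (x v : Vec d),
      deriv (fun s => f (s, (x, v))) t +
        ⟪E (t, x), gradv (fun p => f (t, p)) x v⟫ = 0)
    (hpde2 : ∀ (t : ℝ) (x : Vec d),
      deriv (fun s => E (s, x)) t = -Jcur (fun p => f (t, p)) x) :
    ∀ t₁ t₂ : ℝ,
      Kin (fun p => f (t₁, p)) + Wel (fun x => E (t₁, x)) =
        Kin (fun p => f (t₂, p)) + Wel (fun x => E (t₂, x)) := by
  classical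
  have hfc : Continuous f := hf.continuous
  have hEc : Continuous E := hE.continuous
  have hDf : Differentiable ℝ f := hf.differentiable one_ne_zero
  have hDE : Differentiable ℝ E := hE.differentiable one_ne_zero
  set Kx : Set (Vec d) := Prod.fst '' K₀ with hKxdef
  set Kv : Set (Vec d) := Prod.snd '' K₀ with hKvdef
  have hKxc : IsCompact Kx := hK₀.image continuous_fst
  have hKvc : IsCompact Kv := hK₀.image continuous_snd
  have hfz : ∀ (s : ℝ) (p : Vec d × Vec d), p ∉ K₀ → f (s, p) = 0 := by
    intro s p hp
    by_contra h
    exact hp (hsupp s (by simpa [Function.mem_support] using h))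
  have hfdz : ∀ (q : ℝ × (Vec d × Vec d)), q.2 ∉ K₀ → fderiv ℝ f q = 0 := by
    intro q hq
    have ho : IsOpen {q' : ℝ × (Vec d × Vec d) | q'.2 ∉ K₀} :=
      hK₀.isClosed.isOpen_compl.preimage continuous_snd
    have hev : f =ᶠ[nhds q] fun _ => (0 : ℝ) :=
      Filter.eventuallyEq_of_mem (ho.mem_nhds hq) fun q' hq' => hfz q'.1 q'.2 hq'
    rw [hev.fderiv_eq]
    exact fderiv_const_apply 0
  have hderivf : ∀ (s : ℝ) (p : Vec d × Vec d),
      HasDerivAt (fun σ => f (σ, p)) (fderiv ℝ f (s, p) (1, 0)) s := by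
    intro s p
    have h2 : HasDerivAt (fun σ : ℝ => (σ, p)) ((1 : ℝ), (0 : Vec d × Vec d)) s :=
      HasDerivAt.prodMk (hasDerivAt_id s) (hasDerivAt_const s p)
    exact (hDf (s, p)).hasFDerivAt.comp_hasDerivAt s h2
  have hderivE : ∀ (s : ℝ) (x : Vec d),
      HasDerivAt (fun σ => E (σ, x)) (-Jcur (fun p => f (s, p)) x) s := by
    intro s x
    have h2 : HasDerivAt (fun σ : ℝ => (σ, x)) ((1 : ℝ), (0 : Vec d)) s :=
      HasDerivAt.prodMk (hasDerivAt_id s) (hasDerivAt_const s x)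
    have h' : HasDerivAt (fun σ => E (σ, x)) ((fderiv ℝ E (s, x)) (1, 0)) s :=
      (hDE (s, x)).hasFDerivAt.comp_hasDerivAt s h2
    have h := h'
    have h3 := h'.deriv
    rw [hpde2 s x] at h3
    rwa [← h3] at h
  have hJz : ∀ (s : ℝ) (x : Vec d), x ∉ Kx → Jcur (fun p => f (s, p)) x = 0 := by
    intro s x hx
    have hz : ∀ v : Vec d, f (s, (x, v)) = 0 :=
      fun v => hfz s (x, v) fun h => hx ⟨(x, v), h, rfl⟩
    simp [Jcur, hz]
  suffices key : ∀ t : ℝ, HasDerivAt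
      (fun s => Kin (fun p => f (s, p)) + Wel (fun x => E (s, x))) 0 t by
    intro t₁ t₂
    exact is_const_of_deriv_eq_zero (fun t => (key t).differentiableAt)
      (fun t => (key t).deriv) t₁ t₂
  intro t
  have hballIcc : ∀ s : ℝ, s ∈ Metric.ball t 1 → s ∈ Set.Icc (t - 1) (t + 1) := by
    intro s hs
    have h := abs_sub_lt_iff.mp (by rwa [Metric.mem_ball, Real.dist_eq] at hs)
    exact ⟨by linarith [h.2], by linarith [h.1]⟩
  have htIcc : t ∈ Set.Icc (t - 1) (t + 1) := ⟨by linarith, by linarith⟩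
  -- bounds
  obtain ⟨M₁, hM₁⟩ := ((isCompact_Icc (a := t - 1) (b := t + 1)).prod hK₀).exists_bound_of_continuousOn
    hfc.continuousOn
  obtain ⟨R₁, hR₁⟩ := hKvc.exists_bound_of_continuousOn continuous_id.continuousOn
  set M : ℝ := max M₁ 0 with hMdef
  set Rb : ℝ := max R₁ 0 with hRdef
  have hM0 : (0 : ℝ) ≤ M := le_max_right _ _
  have hR0 : (0 : ℝ) ≤ Rb := le_max_right _ _
  have hMR : ∀ s ∈ Set.Icc (t - 1) (t + 1), ∀ (x v : Vec d),
      ‖f (s, (x, v)) • v‖ ≤ Kv.indicator (fun _ => M * Rb) v := by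
    intro s hs x v
    by_cases hv : v ∈ Kv
    · rw [Set.indicator_of_mem hv]
      by_cases hp : (x, v) ∈ K₀
      · rw [norm_smul]
        exact mul_le_mul (le_trans (hM₁ (s, (x, v)) ⟨hs, hp⟩) (le_max_left _ _))
          (le_trans (hR₁ v hv) (le_max_left _ _)) (norm_nonneg _) hM0
      · simp [hfz s _ hp, mul_nonneg hM0 hR0]
    · have hp : (x, v) ∉ K₀ := fun h => hv ⟨(x, v), h, rfl⟩
      simp [Set.indicator_of_notMem hv, hfz s _ hp]
  have hindKv : Integrable (Kv.indicator fun _ => M * Rb) (volume : Measure (Vec d)) :=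
    (integrableOn_const hKvc.measure_lt_top.ne).integrable_indicator hKvc.measurableSet
  set CJ : ℝ := M * Rb * (volume Kv).toReal with hCJdef
  have hCJ0 : (0 : ℝ) ≤ CJ := by positivity
  have hJb : ∀ s ∈ Set.Icc (t - 1) (t + 1), ∀ x : Vec d,
      ‖Jcur (fun p => f (s, p)) x‖ ≤ CJ := by
    intro s hs x
    have h1 : ‖∫ v, f (s, (x, v)) • v‖ ≤ ∫ v, Kv.indicator (fun _ => M * Rb) v :=
      norm_integral_le_of_norm_le hindKv (Filter.Eventually.of_forall (hMR s hs x))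
    rw [integral_indicator_const _ hKvc.measurableSet] at h1
    calc ‖Jcur (fun p => f (s, p)) x‖ = ‖∫ v, f (s, (x, v)) • v‖ := rfl
      _ ≤ (volume Kv).toReal • (M * Rb) := h1
      _ = CJ := by rw [smul_eq_mul, hCJdef]; ring
  have hJcont : Continuous fun x : Vec d => Jcur (fun p => f (t, p)) x := by
    simp only [Jcur]
    apply continuous_of_dominated (bound := Kv.indicator fun _ => M * Rb)
    · intro x
      exact ((hfc.comp (continuous_const.prodMk (continuous_const.prodMk
        continuous_id))).smul continuous_id).aestronglyMeasurable
    · intro x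
      exact Filter.Eventually.of_forall (hMR t htIcc x)
    · exact hindKv
    · exact Filter.Eventually.of_forall fun v =>
        (hfc.comp ((continuous_const.prodMk ((continuous_id.prodMk
          continuous_const))) : Continuous fun x : Vec d => ((t, (x, v)) : ℝ × (Vec d × Vec d))))
          |>.smul continuous_const
  obtain ⟨CE₁, hCE₁⟩ := ((isCompact_Icc (a := t - 1) (b := t + 1)).prod hKxc).exists_bound_of_continuousOn
    hEc.continuousOn
  set CE : ℝ := max CE₁ 0 with hCEdef
  have hCE0 : (0 : ℝ) ≤ CE := le_max_right _ _
  -- Kinetic part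
  set F' : ℝ × (Vec d × Vec d) → ℝ := fun q => fderiv ℝ f q (1, 0) * ‖q.2.2‖ ^ 2 with hF'def
  have hF'cont : Continuous F' :=
    ((hf.continuous_fderiv one_ne_zero).clm_apply continuous_const).mul (continuous_snd.snd.norm.pow 2)
  have hF'z : ∀ (s : ℝ) (p : Vec d × Vec d), p ∉ K₀ → F' (s, p) = 0 := by
    intro s p hp
    simp [hF'def, hfdz (s, p) hp]
  obtain ⟨C₁', hC₁'⟩ := ((isCompact_Icc (a := t - 1) (b := t + 1)).prod hK₀).exists_bound_of_continuousOn
    hF'cont.continuousOn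
  set C₁ : ℝ := max C₁' 0 with hC₁def
  have hbd1 : Integrable (K₀.indicator fun _ => C₁) (volume : Measure (Vec d × Vec d)) :=
    (integrableOn_const hK₀.measure_lt_top.ne).integrable_indicator hK₀.measurableSet
  have hFscont : ∀ s : ℝ, Continuous fun p : Vec d × Vec d => f (s, p) * ‖p.2‖ ^ 2 :=
    fun s => (hfc.comp (continuous_const.prodMk continuous_id)).mul (continuous_snd.norm.pow 2)
  have hFsint : ∀ s : ℝ, Integrable (fun p : Vec d × Vec d => f (s, p) * ‖p.2‖ ^ 2) := by
    intro s
    exact (hFscont s).integrable_of_hasCompactSupport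
      (HasCompactSupport.intro hK₀ fun p hp => by simp [hfz s p hp])
  have hKinDeriv : HasDerivAt (fun s => ∫ p : Vec d × Vec d, f (s, p) * ‖p.2‖ ^ 2)
      (∫ p : Vec d × Vec d, F' (t, p)) t := by
    have H := hasDerivAt_integral_of_dominated_loc_of_deriv_le (𝕜 := ℝ) (s := Metric.ball t 1) (Metric.ball_mem_nhds t one_pos)
      (F := fun s (p : Vec d × Vec d) => f (s, p) * ‖p.2‖ ^ 2)
      (F' := fun s (p : Vec d × Vec d) => F' (s, p))
      (bound := K₀.indicator fun _ => C₁)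
      (Filter.Eventually.of_forall fun s => (hFscont s).aestronglyMeasurable)
      (hFsint t)
      ((hF'cont.comp (continuous_const.prodMk continuous_id)).aestronglyMeasurable)
      ?_ hbd1 ?_
    · exact H.2
    · refine Filter.Eventually.of_forall fun p s hs => ?_
      show ‖F' (s, p)‖ ≤ (K₀.indicator fun _ => C₁) p
      by_cases hp : p ∈ K₀
      · rw [Set.indicator_of_mem hp]
        exact le_trans (hC₁' (s, p) ⟨hballIcc s hs, hp⟩) (le_max_left _ _)
      · rw [Set.indicator_of_notMem hp, hF'z s p hp]
        simp
    · exact Filter.Eventually.of_forall fun p s _ => (hderivf s p).mul_const _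
  have hF'tint : Integrable (fun p : Vec d × Vec d => F' (t, p)) :=
    (hF'cont.comp (continuous_const.prodMk continuous_id)).integrable_of_hasCompactSupport
      (HasCompactSupport.intro hK₀ fun p hp => hF'z t p hp)
  -- value of the kinetic derivative
  have hKinVal : (∫ p : Vec d × Vec d, F' (t, p))
      = ∫ x : Vec d, 2 * ⟪E (t, x), Jcur (fun p => f (t, p)) x⟫ := by
    rw [Measure.volume_eq_prod] at hF'tint
    rw [Measure.volume_eq_prod (Vec d) (Vec d), integral_prod _ hF'tint]
    refine integral_congr_ae (Filter.Eventually.of_forall fun x => ?_)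
    -- fixed x
    set e : Vec d := E (t, x) with hedef
    set g : Vec d → ℝ := fun v => f (t, (x, v)) with hgdef
    set Lm : Vec d →L[ℝ] ℝ × (Vec d × Vec d) :=
      (0 : Vec d →L[ℝ] ℝ).prod ((0 : Vec d →L[ℝ] Vec d).prod
        (ContinuousLinearMap.id ℝ (Vec d))) with hLmdef
    have hgd : ∀ v : Vec d, HasFDerivAt g ((fderiv ℝ f (t, (x, v))).comp Lm) v := by
      intro v
      have hA : HasFDerivAt (fun w : Vec d => ((t, (x, w)) : ℝ × (Vec d × Vec d))) Lm v :=
        HasFDerivAt.prodMk (hasFDerivAt_const t v) (HasFDerivAt.prodMk (hasFDerivAt_const x v) (hasFDerivAt_id v))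
      exact (hDf (t, (x, v))).hasFDerivAt.comp v hA
    have hgfd : ∀ v : Vec d, fderiv ℝ g v = (fderiv ℝ f (t, (x, v))).comp Lm :=
      fun v => (hgd v).fderiv
    have hgfde : (fun v : Vec d => fderiv ℝ g v e)
        = fun v : Vec d => fderiv ℝ f (t, (x, v)) (0, (0, e)) := by
      funext v; rw [hgfd v]; rfl
    have hgz : ∀ v : Vec d, v ∉ Kv → g v = 0 :=
      fun v hv => hfz t (x, v) fun h => hv ⟨(x, v), h, rfl⟩
    have hgcs : HasCompactSupport g := HasCompactSupport.intro hKvc hgz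
    have hgcont : Continuous g := hfc.comp (continuous_const.prodMk (continuous_const.prodMk continuous_id))
    have hgec : Continuous fun v : Vec d => fderiv ℝ g v e := by
      rw [hgfde]
      exact ((hf.continuous_fderiv one_ne_zero).comp (continuous_const.prodMk (continuous_const.prodMk continuous_id))).clm_apply continuous_const
    have hgez : ∀ v : Vec d, v ∉ Kv → fderiv ℝ g v e = 0 := by
      intro v hv
      have hp : (x, v) ∉ K₀ := fun h => hv ⟨(x, v), h, rfl⟩
      rw [hgfd v]
      simp [hfdz (t, (x, v)) hp]
    have hnsq : ∀ w : Vec d, HasFDerivAt (fun w : Vec d => ‖w‖ ^ 2) (2 • innerSL ℝ w) w :=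
      fun w => by simpa using (hasFDerivAt_id (𝕜 := ℝ) w).norm_sq
    have hnfd : ∀ w : Vec d, fderiv ℝ (fun w : Vec d => ‖w‖ ^ 2) w e = 2 * ⟪w, e⟫ := by
      intro w
      rw [(hnsq w).fderiv]
      show ((2 : ℕ) • innerSL ℝ w) e = 2 * ⟪w, e⟫
      rw [two_smul, ContinuousLinearMap.add_apply, innerSL_apply_apply]
      ring
    -- pointwise identification of the integrand
    have ha : ∀ v : Vec d, F' (t, (x, v)) = -(fderiv ℝ g v e) * ‖v‖ ^ 2 := by
      intro v
      have h1 := (hderivf t (x, v)).deriv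
      have h2 := hpde1 t x v
      have h3 : ⟪e, gradv (fun p => f (t, p)) x v⟫ = fderiv ℝ g v e := by
        rw [gradv, real_inner_comm, gradient, InnerProductSpace.toDual_symm_apply]
      rw [h1, h3] at h2
      have : fderiv ℝ f (t, (x, v)) (1, 0) = -(fderiv ℝ g v e) := by linarith
      simp only [hF'def]
      rw [this]
    -- integration by parts
    have hIBP := integral_mul_fderiv_eq_neg_fderiv_mul_of_integrable
      (μ := (volume : Measure (Vec d))) (f := g) (g := fun w : Vec d => ‖w‖ ^ 2) (v := e)
      ((hgec.mul (continuous_norm.pow 2)).integrable_of_hasCompactSupport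
        (HasCompactSupport.intro hKvc fun v hv => by simp [hgez v hv]))
      ((hgcont.mul (((contDiff_norm_sq (𝕜 := ℝ) (n := 1)).continuous_fderiv
          one_ne_zero).clm_apply continuous_const)).integrable_of_hasCompactSupport
        (HasCompactSupport.intro hKvc fun v hv => by simp [hgz v hv]))
      ((hgcont.mul (continuous_norm.pow 2)).integrable_of_hasCompactSupport
        (HasCompactSupport.intro hKvc fun v hv => by simp [hgz v hv]))
      (fun v _ => (hgd v).differentiableAt)
      (fun v _ => ((contDiff_norm_sq (𝕜 := ℝ) (n := 1)).differentiable one_ne_zero) v)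
    have hsmulint : Integrable (fun v : Vec d => g v • v) :=
      (hgcont.smul continuous_id).integrable_of_hasCompactSupport
        (HasCompactSupport.intro hKvc fun v hv => by simp [hgz v hv])
    calc (∫ v : Vec d, F' (t, (x, v)))
        = ∫ v : Vec d, -(fderiv ℝ g v e) * ‖v‖ ^ 2 := by
          exact integral_congr_ae (Filter.Eventually.of_forall fun v => ha v)
      _ = -∫ v : Vec d, fderiv ℝ g v e * ‖v‖ ^ 2 := by
          rw [← integral_neg]; congr 1; funext v; ring
      _ = ∫ v : Vec d, g v * fderiv ℝ (fun w : Vec d => ‖w‖ ^ 2) v e := by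
          rw [hIBP]
      _ = ∫ v : Vec d, 2 * ⟪e, g v • v⟫ := by
          congr 1; funext v
          rw [hnfd v, real_inner_smul_right, real_inner_comm]; ring
      _ = 2 * ⟪e, ∫ v : Vec d, g v • v⟫ := by
          rw [integral_const_mul, integral_inner hsmulint e]
      _ = 2 * ⟪E (t, x), Jcur (fun p => f (t, p)) x⟫ := rfl
  -- Electric part
  have hWelDeriv : HasDerivAt (fun s => ∫ x : Vec d, ‖E (s, x)‖ ^ 2)
      (∫ x : Vec d, 2 * ⟪E (t, x), -Jcur (fun p => f (t, p)) x⟫) t := by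
    have hindKx : Integrable (Kx.indicator fun _ => 2 * (CE * CJ)) (volume : Measure (Vec d)) :=
      (integrableOn_const hKxc.measure_lt_top.ne).integrable_indicator hKxc.measurableSet
    have H := hasDerivAt_integral_of_dominated_loc_of_deriv_le (𝕜 := ℝ) (s := Metric.ball t 1) (Metric.ball_mem_nhds t one_pos)
      (F := fun s (x : Vec d) => ‖E (s, x)‖ ^ 2)
      (F' := fun s (x : Vec d) => 2 * ⟪E (s, x), -Jcur (fun p => f (s, p)) x⟫)
      (bound := Kx.indicator fun _ => 2 * (CE * CJ))
      (Filter.Eventually.of_forall fun s =>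
        (((hEc.comp (continuous_const.prodMk continuous_id)).norm.pow 2).aestronglyMeasurable))
      (hW t)
      ((continuous_const.mul
        ((hEc.comp (continuous_const.prodMk continuous_id)).inner hJcont.neg)).aestronglyMeasurable)
      ?_ hindKx ?_
    · exact H.2
    · refine Filter.Eventually.of_forall fun x s hs => ?_
      show ‖2 * ⟪E (s, x), -Jcur (fun p => f (s, p)) x⟫‖
        ≤ (Kx.indicator fun _ => 2 * (CE * CJ)) x
      by_cases hx : x ∈ Kx
      · rw [Set.indicator_of_mem hx]
        have h1 : |⟪E (s, x), -Jcur (fun p => f (s, p)) x⟫|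
            ≤ ‖E (s, x)‖ * ‖Jcur (fun p => f (s, p)) x‖ := by
          refine le_trans (abs_real_inner_le_norm _ _) ?_
          rw [norm_neg]
        have h2 : ‖E (s, x)‖ ≤ CE :=
          le_trans (hCE₁ (s, x) ⟨hballIcc s hs, hx⟩) (le_max_left _ _)
        have h3 := hJb s (hballIcc s hs) x
        have h4 : ‖E (s, x)‖ * ‖Jcur (fun p => f (s, p)) x‖ ≤ CE * CJ :=
          mul_le_mul h2 h3 (norm_nonneg _) hCE0
        rw [Real.norm_eq_abs, abs_mul, abs_two]
        exact mul_le_mul_of_nonneg_left (le_trans h1 h4) (by norm_num)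
      · rw [Set.indicator_of_notMem hx, hJz s x hx]
        simp
    · refine Filter.Eventually.of_forall fun x s _ => ?_
      exact (hderivE s x).norm_sq
  -- combine
  have hsum := hKinDeriv.add hWelDeriv
  have hzero : (∫ p : Vec d × Vec d, F' (t, p))
      + (∫ x : Vec d, 2 * ⟪E (t, x), -Jcur (fun p => f (t, p)) x⟫) = 0 := by
    rw [hKinVal]
    have hneg : (fun x : Vec d => 2 * ⟪E (t, x), -Jcur (fun p => f (t, p)) x⟫)
        = fun x : Vec d => -(2 * ⟪E (t, x), Jcur (fun p => f (t, p)) x⟫) := by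
      funext x; rw [inner_neg_right]; ring
    rw [hneg, integral_neg]
    simp
  rw [hzero] at hsum
  have hfuneq : (fun s => Kin (fun p => f (s, p)) + Wel (fun x => E (s, x)))
      = fun s => (∫ p : Vec d × Vec d, f (s, p) * ‖p.2‖ ^ 2) + ∫ x : Vec d, ‖E (s, x)‖ ^ 2 := by
    funext s
    have hKinEq : Kin (fun p => f (s, p)) = ∫ p : Vec d × Vec d, f (s, p) * ‖p.2‖ ^ 2 := by
      have hint := hFsint s
      rw [Measure.volume_eq_prod] at hint
      simp only [Kin]
      rw [Measure.volume_eq_prod (Vec d) (Vec d), integral_prod _ hint]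
    rw [hKinEq]
    simp only [Wel]
  rw [hfuneq]
  exact hsum
end
end
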